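/- arXiv:1907.08102 — 8 statements merged into one kernel-verified Lean document; each statement's English description precedes it below -/
import Mathlib

section
/- For every 1 ≤ i ≤ n one has ε_i = Σ_{j=1}^{n} (∏_{k=1}^{i−1}(t_k − t_j)) · \bar{f}_j in F^n; in particular the coefficient of \bar{f}_j vanishes whenever j < i, so the change of basis from (ε_i) to (\bar{f}_j) is triangular. -/
open scoped BigOperators

noncomputable section

open Polynomial in
lemma leadingCoeff_basisDivisor_aux {F : Type*} [Field F] (x y : F) :
    (Lagrange.basisDivisor x y).leadingCoeff = (x - y)⁻¹ := by
  rw [Lagrange.basisDivisor, leadingCoeff_mul, leadingCoeff_C, (monic_X_sub_C y).leadingCoeff,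
    mul_one]

open Polynomial in
lemma lagrange_sum_inv_eq_zero {F ι : Type*} [Field F] [DecidableEq ι] {s : Finset ι}
    {v : ι → F} (hvs : Set.InjOn v s) (hs : 2 ≤ s.card) :
    ∑ j ∈ s, ∏ k ∈ s.erase j, (v j - v k)⁻¹ = 0 := by
  have hsum := Lagrange.sum_basis hvs (Finset.card_pos.mp (by omega))
  have h1 : ((1 : F[X])).coeff (s.card - 1) = 0 := by
    rw [Polynomial.coeff_one]
    simp only [if_neg (by omega : ¬ s.card - 1 = 0)]
  calc ∑ j ∈ s, ∏ k ∈ s.erase j, (v j - v k)⁻¹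
      = ∑ j ∈ s, (Lagrange.basis s v j).coeff (s.card - 1) := by
        refine Finset.sum_congr rfl fun j hj => ?_
        have hnd := Lagrange.natDegree_basis hvs hj
        rw [show (s.card - 1) = (Lagrange.basis s v j).natDegree from hnd.symm,
          Polynomial.coeff_natDegree, Lagrange.basis, leadingCoeff_prod]
        exact (Finset.prod_congr rfl fun k _ => leadingCoeff_basisDivisor_aux _ _).symm
    _ = 0 := by rw [← Polynomial.finset_sum_coeff, hsum, h1]

lemma lagrange_sum_inv_eq_zero' {F ι : Type*} [Field F] [DecidableEq ι] {s : Finset ι}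
    {v : ι → F} (hvs : Set.InjOn v s) (hs : 2 ≤ s.card) :
    ∑ j ∈ s, (∏ k ∈ s.erase j, (v k - v j))⁻¹ = 0 := by
  have hvs' : Set.InjOn (fun x => -v x) s := fun a ha b hb h => hvs ha hb (by
    simpa using congrArg Neg.neg h)
  have h := lagrange_sum_inv_eq_zero hvs' hs
  simp only [neg_sub_neg] at h
  simpa [Finset.prod_inv_distrib] using h

/-- The field `ℚ(t_1, …, t_n)` of rational functions in `n` variables. -/
abbrev RatFunField (n : ℕ) : Type :=
  FractionRing (MvPolynomial (Fin n) ℚ)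

/-- The variable `t_i` viewed inside `ℚ(t_1, …, t_n)`. -/
noncomputable def tvar {n : ℕ} (i : Fin n) : RatFunField n :=
  algebraMap (MvPolynomial (Fin n) ℚ) (RatFunField n) (MvPolynomial.X i)

lemma tvar_injective {n : ℕ} : Function.Injective (tvar (n := n)) := fun a b h =>
  MvPolynomial.X_injective
    (IsFractionRing.injective (MvPolynomial (Fin n) ℚ) (RatFunField n) h)

lemma tvar_sub_ne_zero {n : ℕ} {k j : Fin n} (h : k ≠ j) : tvar k - tvar j ≠ 0 :=
  sub_ne_zero_of_ne fun he => h (tvar_injective he)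

/-- `f_j = ε_j + ∑_{m=j+1}^{n} (∏_{l=j+1}^{m} (t_l − t_j))⁻¹ ε_m ∈ F^n`. -/
noncomputable def fvec {n : ℕ} (j : Fin n) : Fin n → RatFunField n :=
  Pi.single j 1 +
    ∑ m ∈ Finset.Ioi j,
      (∏ l ∈ Finset.Ioc j m, (tvar l - tvar j))⁻¹ • Pi.single m 1

/-- `f̄_j = (∏_{k=1}^{j−1} (t_k − t_j))⁻¹ f_j`. -/
noncomputable def fbar {n : ℕ} (j : Fin n) : Fin n → RatFunField n :=
  (∏ k ∈ Finset.Iio j, (tvar k - tvar j))⁻¹ • fvec j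

/-- For every `1 ≤ i ≤ n` one has
`ε_i = ∑_{j=1}^{n} (∏_{k=1}^{i−1} (t_k − t_j)) • f̄_j` in `F^n`;
in particular the coefficient of `f̄_j` vanishes whenever `j < i`, so the change of
basis from `(ε_i)` to `(f̄_j)` is triangular.
(Indices are `0`-based: `i : Fin n` corresponds to the index `i+1`, and
`∏_{k=1}^{i−1}` becomes a product over `k ∈ Finset.Iio i`.) -/
theorem eps_in_terms_of_fbar (n : ℕ) (i : Fin n) :
    (Pi.single i 1 : Fin n → RatFunField n) =
      ∑ j : Fin n, (∏ k ∈ Finset.Iio i, (tvar k - tvar j)) • fbar j ∧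
    ∀ j : Fin n, j < i → (∏ k ∈ Finset.Iio i, (tvar k - tvar j)) = 0 := by
  classical
  have hzero : ∀ j : Fin n, j < i → (∏ k ∈ Finset.Iio i, (tvar k - tvar j)) = 0 := by
    intro j hj
    exact Finset.prod_eq_zero (Finset.mem_Iio.mpr hj) (sub_self _)
  refine ⟨?_, hzero⟩
  funext m
  simp only [Finset.sum_apply]
  have hterm : ∀ j : Fin n,
      ((∏ k ∈ Finset.Iio i, (tvar k - tvar j)) • fbar j) m
        = (∏ k ∈ Finset.Iio i, (tvar k - tvar j)) *
          ((∏ k ∈ Finset.Iio j, (tvar k - tvar j))⁻¹ *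
            ((if m = j then 1 else 0) +
              (if j < m then (∏ l ∈ Finset.Ioc j m, (tvar l - tvar j))⁻¹ else 0))) := by
    intro j
    simp only [fbar, fvec, Pi.smul_apply, smul_eq_mul, Pi.add_apply, Finset.sum_apply,
      Pi.single_apply, mul_ite, mul_one, mul_zero, Finset.sum_ite_eq, Finset.mem_Ioi]
  rw [Finset.sum_congr rfl fun j _ => hterm j]
  set E : Fin n → RatFunField n := fun j =>
    (∏ k ∈ Finset.Iio i, (tvar k - tvar j)) *
      ((∏ k ∈ Finset.Iio j, (tvar k - tvar j))⁻¹ *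
        ((if m = j then 1 else 0) +
          (if j < m then (∏ l ∈ Finset.Ioc j m, (tvar l - tvar j))⁻¹ else 0))) with hE
  have hrestrict : ∀ j ∈ Finset.univ, j ∉ Finset.Icc i m → E j = 0 := by
    intro j _ hj
    rw [Finset.mem_Icc, not_and_or, not_le, not_le] at hj
    rcases hj with hj | hj
    · simp [hE, hzero j hj]
    · have h1 : ¬ (m = j) := ne_of_lt hj
      have h2 : ¬ (j < m) := not_lt_of_gt hj
      simp [hE, h1, h2]
  rw [← Finset.sum_subset (Finset.subset_univ (Finset.Icc i m)) hrestrict]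
  rcases lt_trichotomy m i with hmi | hmi | hmi
  · rw [Finset.Icc_eq_empty (not_le.mpr hmi), Finset.sum_empty,
      Pi.single_eq_of_ne (ne_of_lt hmi)]
  · subst hmi
    rw [Finset.Icc_self, Finset.sum_singleton]
    have hci : (∏ k ∈ Finset.Iio m, (tvar k - tvar m)) ≠ 0 :=
      Finset.prod_ne_zero_iff.mpr fun k hk =>
        tvar_sub_ne_zero (ne_of_lt (Finset.mem_Iio.mp hk))
    simp [hE, hci, Pi.single_eq_same]
  · -- i < m
    rw [Pi.single_eq_of_ne (ne_of_gt hmi)]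
    have hEeq : ∀ j ∈ Finset.Icc i m,
        E j = (∏ k ∈ (Finset.Icc i m).erase j, (tvar k - tvar j))⁻¹ := by
      intro j hj
      rw [Finset.mem_Icc] at hj
      obtain ⟨hij, hjm⟩ := hj
      have hparen : ((if m = j then 1 else 0) +
            (if j < m then (∏ l ∈ Finset.Ioc j m, (tvar l - tvar j))⁻¹ else 0))
          = (∏ l ∈ Finset.Ioc j m, (tvar l - tvar j))⁻¹ := by
        rcases eq_or_lt_of_le hjm with h | h
        · subst h
          simp
        · simp [ne_of_gt h, h]
      have hIio : Finset.Iio j = Finset.Iio i ∪ Finset.Ico i j := by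
        ext x
        simp only [Finset.mem_Iio, Finset.mem_union, Finset.mem_Ico, Fin.lt_def, Fin.le_def]
        omega
      have hdisj : Disjoint (Finset.Iio i) (Finset.Ico i j) := by
        rw [Finset.disjoint_left]
        intro x hx hx'
        rw [Finset.mem_Iio, Fin.lt_def] at hx
        rw [Finset.mem_Ico, Fin.le_def, Fin.lt_def] at hx'
        omega
      have hci : (∏ k ∈ Finset.Iio i, (tvar k - tvar j)) ≠ 0 :=
        Finset.prod_ne_zero_iff.mpr fun k hk =>
          tvar_sub_ne_zero (by
            rw [Finset.mem_Iio] at hk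
            exact ne_of_lt (lt_of_lt_of_le hk hij))
      have herase : (Finset.Icc i m).erase j = Finset.Ico i j ∪ Finset.Ioc j m := by
        ext x
        simp only [Finset.mem_erase, Finset.mem_Icc, Finset.mem_union, Finset.mem_Ico,
          Finset.mem_Ioc, Fin.lt_def, Fin.le_def, ne_eq, Fin.ext_iff]
        omega
      have hdisj2 : Disjoint (Finset.Ico i j) (Finset.Ioc j m) := by
        rw [Finset.disjoint_left]
        intro x hx hx'
        rw [Finset.mem_Ico, Fin.le_def, Fin.lt_def] at hx
        rw [Finset.mem_Ioc, Fin.le_def, Fin.lt_def] at hx'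
        omega
      simp only [hE]
      rw [hparen, hIio, Finset.prod_union hdisj, herase, Finset.prod_union hdisj2,
        mul_inv, mul_inv, ← mul_assoc, ← mul_assoc, mul_inv_cancel₀ hci, one_mul]
    rw [Finset.sum_congr rfl hEeq]
    refine (lagrange_sum_inv_eq_zero' (tvar_injective.injOn) ?_).symm
    rw [Nat.succ_le_iff]
    exact Finset.one_lt_card.mpr ⟨i, Finset.mem_Icc.mpr ⟨le_refl i, le_of_lt hmi⟩,
      m, Finset.mem_Icc.mpr ⟨le_of_lt hmi, le_refl m⟩, ne_of_lt hmi⟩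

end
end

section
/- The Vandermonde product ∏_{1≤a<b≤k}(x_b − x_a) divides D_I in ℤ[x_1,…,x_k,t_1,…,t_N], and the quotient polynomial s_λ(x|t) := D_I / ∏_{1≤a<b≤k}(x_b − x_a) (the factorial Schur polynomial associated to I) is symmetric in the variables x_1,…,x_k. -/
open scoped BigOperators

noncomputable section

/-- The polynomial ring `ℤ[x_1,…,x_k, t_1, t_2, …]`: the variable `Sum.inl b` is
`x_{b+1}` and `Sum.inr c` is `t_{c+1}` (`0`-based indexing). -/
abbrev PolyXT (k : ℕ) : Type := MvPolynomial (Fin k ⊕ ℕ) ℤ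

/-- The generalized factorial power `(x_b | t)^a = (x_b + t_1)(x_b + t_2) ⋯ (x_b + t_a)`,
with `(x_b | t)^0 = 1`. -/
noncomputable def factPow {k : ℕ} (b : Fin k) (a : ℕ) : PolyXT k :=
  ∏ c ∈ Finset.range a, (MvPolynomial.X (Sum.inl b) + MvPolynomial.X (Sum.inr c))

/-- The Vandermonde product `∏_{1 ≤ a < b ≤ k} (x_b − x_a)`. -/
noncomputable def vandermondeProd (k : ℕ) : PolyXT k :=
  ∏ a : Fin k, ∏ b ∈ Finset.Ioi a,
    (MvPolynomial.X (Sum.inl b) - MvPolynomial.X (Sum.inl a))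

/-- The determinant `D_I = det((x_b|t)^{i−1})_{i ∈ I, 1 ≤ b ≤ k}`, where the set
`I = {i_1 < ⋯ < i_k}` of positive integers is encoded by the strictly monotone
function `iI : Fin k → ℕ` (so the row `a` has exponent `iI a − 1`). -/
noncomputable def DI {k : ℕ} (iI : Fin k → ℕ) : PolyXT k :=
  Matrix.det (Matrix.of fun a b : Fin k => factPow b (iI a - 1))

/-!
Substituting `x_a` for `x_b` (`a ≠ b`) makes two columns of `D_I` equal, so the prime
`x_b - x_a` divides `D_I`; these primes are pairwise non-associated, hence their product, the
Vandermonde product, divides `D_I`. A permutation of the `x`'s permutes the columns of `D_I`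
and of the Vandermonde determinant alike, multiplying both by its sign, so the quotient is
invariant.
-/

open Function MvPolynomial Matrix

theorem Finset.prod_dvd_of_prime_of_pairwise_not_dvd {M₀ ι : Type*} [CommMonoidWithZero M₀]
    [IsCancelMulZero M₀] [DecidableEq ι] {s : Finset ι} {f : ι → M₀} {n : M₀}
    (hp : ∀ i ∈ s, Prime (f i)) (hs : (s : Set ι).Pairwise fun i j => ¬ f i ∣ f j)
    (hdvd : ∀ i ∈ s, f i ∣ n) : ∏ i ∈ s, f i ∣ n := by
  induction s using Finset.induction_on generalizing n with
  | empty => simp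
  | insert a s ha ih =>
    rw [Finset.prod_insert ha]
    obtain ⟨m, rfl⟩ := hdvd a (Finset.mem_insert_self a s)
    refine mul_dvd_mul_left _ (ih (fun i hi => hp i (Finset.mem_insert_of_mem hi))
      (hs.mono (by simp)) fun i hi => ?_)
    refine ((hp i (Finset.mem_insert_of_mem hi)).dvd_or_dvd
      (hdvd i (Finset.mem_insert_of_mem hi))).resolve_left ?_
    exact hs (Finset.mem_insert_of_mem hi) (Finset.mem_insert_self a s) (ne_of_mem_of_not_mem hi ha)

namespace MvPolynomial

variable {R σ : Type*} [CommRing R]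

theorem polynomial_eval_aeval_update_X [DecidableEq σ] (i : σ) (v : MvPolynomial σ R)
    (p : MvPolynomial σ R) :
    (aeval (update (Polynomial.C ∘ X) i Polynomial.X) p).eval v = aeval (update X i v) p := by
  rw [← Polynomial.coe_aeval_eq_eval, ← AlgHom.restrictScalars_apply R, ← AlgHom.comp_apply,
    comp_aeval]
  congr 2
  ext s
  rcases eq_or_ne s i with rfl | hs <;> simp [*]

theorem X_sub_X_dvd_sub_rename_update [DecidableEq σ] (i j : σ) (p : MvPolynomial σ R) :
    X i - X j ∣ p - rename (update id i j) p := by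
  have h : p = aeval (update X i (X i)) p := by simp
  rw [rename_eq_aeval, comp_update, comp_id]
  nth_rewrite 1 [h]
  rw [← polynomial_eval_aeval_update_X, ← polynomial_eval_aeval_update_X]
  exact Polynomial.sub_dvd_eval_sub _ _ _

theorem X_sub_X_dvd_iff [DecidableEq σ] (i j : σ) (p : MvPolynomial σ R) :
    X i - X j ∣ p ↔ rename (update id i j) p = 0 := by
  refine ⟨fun ⟨q, hq⟩ => ?_, fun h => ?_⟩
  · rcases eq_or_ne j i with rfl | hji <;> simp [*]
  · simpa [h] using X_sub_X_dvd_sub_rename_update i j p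

theorem prime_X_sub_X [IsDomain R] {i j : σ} (h : i ≠ j) :
    Prime (X i - X j : MvPolynomial σ R) := by
  classical
  let e : MvPolynomial σ R ≃ₐ[R] Polynomial (MvPolynomial {x : σ // x ≠ i} R) :=
    (renameEquiv R (Equiv.optionSubtypeNe i).symm).trans (optionEquivLeft R _)
  have he : e (X i - X j) = Polynomial.X - Polynomial.C (X ⟨j, h.symm⟩) := by
    simp [e, Equiv.optionSubtypeNe_symm_of_ne h.symm]
  exact (MulEquiv.prime_iff e).mp (he ▸ Polynomial.prime_X_sub_C _)

theorem rename_update_X_sub_X_ne_zero [Nontrivial R] [DecidableEq σ] {ι : Type*} [LinearOrder ι]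
    {f : ι → σ} (hf : Injective f) {a b c d : ι} (hab : a < b) (hcd : c < d)
    (hne : (a, b) ≠ (c, d)) :
    rename (update id (f b) (f a)) (X (f d) - X (f c) : MvPolynomial σ R) ≠ 0 := by
  have hu : ∀ x, update id (f b) (f a) (f x) = f (update id b a x) := fun x => by
    simp [update_apply, hf.eq_iff, apply_ite f]
  simp only [map_sub, rename_X, hu, sub_ne_zero, ne_eq, X_inj, hf.eq_iff, update_apply, id]
  grind

theorem prod_X_sub_X_dvd [IsDomain R] [DecidableEq σ] {ι : Type*} [LinearOrder ι] [Fintype ι]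
    [LocallyFiniteOrderTop ι] {f : ι → σ} (hf : Injective f) {p : MvPolynomial σ R}
    (hp : ∀ a b, a < b → rename (update id (f b) (f a)) p = 0) :
    ∏ a, ∏ b ∈ Finset.Ioi a, (X (f b) - X (f a)) ∣ p := by
  rw [Finset.prod_sigma']
  refine Finset.prod_dvd_of_prime_of_pairwise_not_dvd (fun ⟨a, b⟩ hab => ?_) ?_
    fun ⟨a, b⟩ hab => (X_sub_X_dvd_iff _ _ p).2 (hp a b (by simpa using hab))
  · exact prime_X_sub_X (hf.ne (by simpa using hab : a < b).ne')
  rintro ⟨a, b⟩ hab ⟨c, d⟩ hcd hne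
  simp only [Finset.coe_sigma, Set.mem_sigma_iff, Finset.coe_univ, Set.mem_univ, Finset.coe_Ioi,
    Set.mem_Ioi, true_and] at hab hcd
  rw [X_sub_X_dvd_iff]
  exact rename_update_X_sub_X_ne_zero hf hab hcd (by simpa using hne)

end MvPolynomial

theorem rename_factPow {k : ℕ} (f : Fin k → Fin k) (b : Fin k) (e : ℕ) :
    rename (Sum.map f id) (factPow b e) = factPow (f b) e := by
  simp [factPow, map_prod]

theorem rename_DI {k : ℕ} (iI : Fin k → ℕ) (f : Fin k → Fin k) :
    rename (Sum.map f id) (DI iI) =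
      ((of fun a b => factPow b (iI a - 1)).submatrix id f).det := by
  rw [DI, AlgHom.map_det]
  congr 1
  ext a b : 1
  exact rename_factPow f b _

theorem rename_DI_perm {k : ℕ} (iI : Fin k → ℕ) (σ : Equiv.Perm (Fin k)) :
    rename (Sum.map σ id) (DI iI) = Equiv.Perm.sign σ * DI iI := by
  rw [rename_DI, det_permute', DI]

theorem rename_update_DI {k : ℕ} (iI : Fin k → ℕ) {a b : Fin k} (hab : a ≠ b) :
    rename (Sum.map (update id b a) id) (DI iI) = 0 := by
  rw [rename_DI]
  exact det_zero_of_column_eq hab fun r => by simp [hab]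

theorem vandermondeProd_eq_det (k : ℕ) :
    vandermondeProd k = (vandermonde fun b => (X (Sum.inl b) : PolyXT k)).det := by
  rw [det_vandermonde]; rfl

theorem rename_vandermondeProd (k : ℕ) (σ : Equiv.Perm (Fin k)) :
    rename (Sum.map σ id) (vandermondeProd k) = Equiv.Perm.sign σ * vandermondeProd k := by
  rw [vandermondeProd_eq_det, AlgHom.map_det, ← det_permute]
  congr 1
  ext a b : 1
  simp [vandermonde_apply]

theorem vandermondeProd_ne_zero (k : ℕ) : vandermondeProd k ≠ 0 := by
  rw [vandermondeProd_eq_det, det_vandermonde_ne_zero_iff]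
  exact fun a b h => Sum.inl_injective (X_injective h)

theorem vandermondeProd_dvd_DI {k : ℕ} (iI : Fin k → ℕ) : vandermondeProd k ∣ DI iI := by
  refine prod_X_sub_X_dvd Sum.inl_injective fun a b hab => ?_
  have hupdate :
      update id (Sum.inl b) (Sum.inl a) = Sum.map (update id b a) (id : ℕ → ℕ) := by
    ext (x | x)
    · rcases eq_or_ne x b with rfl | hx <;> simp [*]
    · simp
  rw [hupdate]
  exact rename_update_DI iI hab.ne

theorem vandermonde_divides_DI_and_quotient_symmetric_general
    (k : ℕ) (iI : Fin k → ℕ) :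
    vandermondeProd k ∣ DI iI ∧
      ∃ s : PolyXT k, DI iI = vandermondeProd k * s ∧
        ∀ σ : Equiv.Perm (Fin k),
          MvPolynomial.rename (Sum.map σ id) s = s := by
  obtain ⟨s, hs⟩ := vandermondeProd_dvd_DI iI
  refine ⟨⟨s, hs⟩, s, hs, fun σ => ?_⟩
  set ε : PolyXT k := ((Equiv.Perm.sign σ : ℤ) : PolyXT k)
  have hε : ε * vandermondeProd k ≠ 0 :=
    mul_ne_zero (by simp [ε]) (vandermondeProd_ne_zero k)
  refine mul_left_cancel₀ hε ?_
  calc ε * vandermondeProd k * rename (Sum.map σ id) s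
      = rename (Sum.map σ id) (DI iI) := by rw [hs, map_mul, rename_vandermondeProd]
    _ = ε * vandermondeProd k * s := by rw [rename_DI_perm, hs, mul_assoc]

/-- Let `I = {i_1 < ⋯ < i_k}` be a set of `k` positive integers.  Then the
Vandermonde product `∏_{1≤a<b≤k}(x_b − x_a)` divides
`D_I = det((x_b|t)^{i−1})_{i ∈ I, 1≤b≤k}`, and the quotient polynomial
`s_λ(x|t) = D_I / ∏_{1≤a<b≤k}(x_b − x_a)` (the factorial Schur polynomial) is symmetric
in the variables `x_1, …, x_k`:  it is fixed by every renaming of the `x`-variables. -/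
theorem vandermonde_divides_DI_and_quotient_symmetric
    (k : ℕ) (iI : Fin k → ℕ) (hmono : StrictMono iI) (hpos : ∀ a, 1 ≤ iI a) :
    vandermondeProd k ∣ DI iI ∧
      ∃ s : PolyXT k, DI iI = vandermondeProd k * s ∧
        ∀ σ : Equiv.Perm (Fin k),
          MvPolynomial.rename (Sum.map σ id) s = s :=
  vandermonde_divides_DI_and_quotient_symmetric_general k iI

end
end

section
/- For every k-element subset I = {i_1<⋯<i_k} ⊆ {1,…,n}, in the exterior power ⋀^k F^n one has ε_{i_1}∧⋯∧ε_{i_k} = Σ_J det((∏_{c=1}^{i−1}(t_c − t_j))_{i∈I, j∈J}) · \bar{f}_{j_1}∧⋯∧\bar{f}_{j_k}, where the sum runs over all k-element subsets J = {j_1<⋯<j_k} of {1,…,n}, and the determinant is of the k×k matrix whose rows are indexed by i ∈ I in increasing order and whose columns are indexed by j ∈ J in increasing order. -/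
open scoped BigOperators


noncomputable section

set_option synthInstance.maxHeartbeats 1000000 in
/-- The wedge product `v_{s_1} ∧ v_{s_2} ∧ ⋯` (in the exterior algebra of `F^n`) of the
vectors `v s` for `s` running through the finset `S` in increasing order. -/
noncomputable def wedgeOver {n : ℕ} (v : Fin n → (Fin n → RatFunField n))
    (S : Finset (Fin n)) : ExteriorAlgebra (RatFunField n) (Fin n → RatFunField n) :=
  ((S.sort (· ≤ ·)).map fun s => ExteriorAlgebra.ι (RatFunField n) (v s)).prod


namespace SchubertAux

open Polynomial Finset

lemma tvar_injective {n : ℕ} : Function.Injective (tvar (n := n)) := fun a b h =>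
  MvPolynomial.X_injective
    ((IsFractionRing.injective (MvPolynomial (Fin n) ℚ) (RatFunField n)) h)

lemma prod_sub_swap {F : Type*} [Field F] {α : Type*} (s : Finset α) (f : α → F) (x : F) :
    ∏ k ∈ s, (f k - x) = (-1) ^ s.card * ∏ k ∈ s, (x - f k) := by
  rw [← Finset.prod_const, ← Finset.prod_mul_distrib]
  exact Finset.prod_congr rfl fun j _ => by ring

section LagrangeAux

variable {F : Type*} [Field F] {ι : Type*} [DecidableEq ι] {s : Finset ι} {v : ι → F}

lemma basis_eq_C_mul_nodal (s : Finset ι) (v : ι → F) (i : ι) :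
    Lagrange.basis s v i =
      C (Lagrange.nodalWeight s v i) * Lagrange.nodal (s.erase i) v := by
  rw [Lagrange.basis, Lagrange.nodalWeight, Lagrange.nodal, map_prod, ← Finset.prod_mul_distrib]
  exact Finset.prod_congr rfl fun j _ => rfl

lemma coeff_basis_top {i : ι} (hi : i ∈ s) :
    (Lagrange.basis s v i).coeff (s.card - 1) = Lagrange.nodalWeight s v i := by
  rw [basis_eq_C_mul_nodal, coeff_C_mul,
    show s.card - 1 = (Lagrange.nodal (s.erase i) v).natDegree by
      rw [Lagrange.natDegree_nodal, card_erase_of_mem hi],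
    Monic.coeff_natDegree Lagrange.nodal_monic, mul_one]

lemma top_coeff_eq_sum (hvs : Set.InjOn v s) {p : F[X]} (hp : p.degree < s.card) :
    p.coeff (s.card - 1) = ∑ j ∈ s, p.eval (v j) * Lagrange.nodalWeight s v j := by
  conv_lhs => rw [Lagrange.eq_interpolate hvs hp]
  rw [Lagrange.interpolate_apply, Polynomial.finset_sum_coeff]
  exact Finset.sum_congr rfl fun j hj => by rw [coeff_C_mul, coeff_basis_top hj]

end LagrangeAux

lemma lagrange_delta {n : ℕ} (i m : Fin n) :
    ∑ j ∈ Finset.Iic m, (∏ c ∈ Finset.Iio i, (tvar c - tvar j)) *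
        (∏ k ∈ (Finset.Iic m).erase j, (tvar k - tvar j))⁻¹
      = if i = m then 1 else 0 := by
  by_cases him : i ≤ m
  · -- Lagrange interpolation case
    set p : Polynomial (RatFunField n) := ∏ c ∈ Finset.Iio i, (X - C (tvar c)) with hp
    have hmono : p.Monic := monic_prod_of_monic _ _ fun c _ => monic_X_sub_C _
    have hdeg : p.natDegree = (i : ℕ) := by
      rw [hp, natDegree_prod_of_monic _ _ fun c _ => monic_X_sub_C _]
      simp [Fin.card_Iio]
    have hcard : (Finset.Iic m).card = (m : ℕ) + 1 := Fin.card_Iic m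
    have hdlt : p.degree < ((Finset.Iic m).card : ℕ) := by
      refine lt_of_le_of_lt degree_le_natDegree ?_
      rw [hdeg, hcard]
      exact_mod_cast Nat.lt_succ_of_le him
    have hinj : Set.InjOn tvar ((Finset.Iic m : Finset (Fin n)) : Set (Fin n)) :=
      tvar_injective.injOn
    have key := top_coeff_eq_sum hinj hdlt
    rw [hcard, Nat.add_sub_cancel] at key
    have hterm : ∀ j ∈ Finset.Iic m,
        (∏ c ∈ Finset.Iio i, (tvar c - tvar j)) *
            (∏ k ∈ (Finset.Iic m).erase j, (tvar k - tvar j))⁻¹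
          = (-1 : RatFunField n) ^ ((i : ℕ) + (m : ℕ)) *
              (p.eval (tvar j) * Lagrange.nodalWeight (Finset.Iic m) tvar j) := by
      intro j hj
      have h1 : ∏ c ∈ Finset.Iio i, (tvar c - tvar j)
          = (-1 : RatFunField n) ^ (i : ℕ) * p.eval (tvar j) := by
        rw [hp, eval_prod]
        simp only [eval_sub, eval_X, eval_C]
        rw [prod_sub_swap, Fin.card_Iio]
      have h2 : (∏ k ∈ (Finset.Iic m).erase j, (tvar k - tvar j))⁻¹
          = (-1 : RatFunField n) ^ (m : ℕ) * Lagrange.nodalWeight (Finset.Iic m) tvar j := by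
        rw [prod_sub_swap, card_erase_of_mem hj, hcard, Nat.add_sub_cancel, mul_inv,
          Lagrange.nodalWeight, ← Finset.prod_inv_distrib]
        congr 1
        rw [← inv_pow, inv_neg, inv_one]
      rw [h1, h2]
      ring
    rw [Finset.sum_congr rfl hterm, ← Finset.mul_sum, ← key]
    have hcoeff : p.coeff (m : ℕ) = if i = m then 1 else 0 := by
      rcases eq_or_lt_of_le him with he | hlt
      · rw [if_pos he, ← he, ← hdeg, hmono.coeff_natDegree]
      · rw [if_neg (ne_of_lt hlt), coeff_eq_zero_of_natDegree_lt]
        rw [hdeg]; exact_mod_cast hlt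
    rw [hcoeff]
    rcases eq_or_ne i m with he | hne
    · subst he
      simp [← two_mul, pow_mul]
    · simp [hne]
  · -- each term vanishes
    rw [if_neg (fun he => him (le_of_eq he))]
    refine Finset.sum_eq_zero fun j hj => ?_
    have hjm : j ≤ m := Finset.mem_Iic.mp hj
    have hji : j ∈ Finset.Iio i := Finset.mem_Iio.mpr (lt_of_le_of_lt hjm (lt_of_not_ge him))
    rw [Finset.prod_eq_zero hji (sub_self (tvar j)), zero_mul]

lemma Iic_erase_eq {n : ℕ} {j m : Fin n} (hj : j ≤ m) :
    (Finset.Iic m).erase j = Finset.Iio j ∪ Finset.Ioc j m := by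
  ext x
  simp only [Finset.mem_erase, Finset.mem_Iic, Finset.mem_union, Finset.mem_Iio,
    Finset.mem_Ioc, Ne, Fin.ext_iff, Fin.lt_iff_val_lt_val, Fin.le_iff_val_le_val] at hj ⊢
  omega

lemma disj_Iio_Ioc {n : ℕ} {j m : Fin n} : Disjoint (Finset.Iio j) (Finset.Ioc j m) := by
  rw [Finset.disjoint_left]
  intro x hx hx2
  exact absurd ((Finset.mem_Iio.mp hx).trans (Finset.mem_Ioc.mp hx2).1) (lt_irrefl x)

lemma fbar_apply {n : ℕ} (j r : Fin n) :
    fbar j r = (∏ k ∈ Finset.Iio j, (tvar k - tvar j))⁻¹ *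
      (if j = r then 1
        else if j < r then (∏ l ∈ Finset.Ioc j r, (tvar l - tvar j))⁻¹ else 0) := by
  rw [fbar, Pi.smul_apply, smul_eq_mul]
  congr 1
  rw [fvec, Pi.add_apply, Finset.sum_apply]
  simp only [Pi.smul_apply, Pi.single_apply, smul_eq_mul, mul_ite, mul_one, mul_zero]
  rw [Finset.sum_ite_eq (Finset.Ioi j) r
    (fun mm => (∏ l ∈ Finset.Ioc j mm, (tvar l - tvar j))⁻¹)]
  rcases lt_trichotomy j r with h | h | h
  · simp [Finset.mem_Ioi, h, h.ne, h.ne']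
  · simp [h]
  · simp [Finset.mem_Ioi, h.ne, h.ne', not_lt.mpr h.le]

lemma epsilon_eq {n : ℕ} (i : Fin n) :
    (Pi.single i 1 : Fin n → RatFunField n)
      = ∑ j : Fin n, (∏ c ∈ Finset.Iio i, (tvar c - tvar j)) • fbar j := by
  funext r
  rw [Finset.sum_apply]
  simp only [Pi.smul_apply, smul_eq_mul, fbar_apply]
  rw [show (Pi.single i 1 : Fin n → RatFunField n) r = if i = r then 1 else 0 by
    rw [Pi.single_apply]; simp [eq_comm]]
  rw [← lagrange_delta i r,
    ← Finset.sum_subset (Finset.subset_univ (Finset.Iic r)) (fun j _ hj => by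
      have h1 : ¬ (j = r) := fun he => hj (Finset.mem_Iic.mpr (le_of_eq he))
      have h2 : ¬ (j < r) := fun hlt => hj (Finset.mem_Iic.mpr hlt.le)
      rw [if_neg h1, if_neg h2, mul_zero, mul_zero])]
  refine Finset.sum_congr rfl fun j hj => ?_
  congr 1
  rcases eq_or_lt_of_le (Finset.mem_Iic.mp hj) with he | hlt
  · rw [if_pos he, mul_one, ← he, Iic_erase_eq le_rfl, Finset.Ioc_self, Finset.union_empty]
  · rw [if_neg (ne_of_lt hlt), if_pos hlt, Iic_erase_eq hlt.le,
      Finset.prod_union disj_Iio_Ioc, mul_inv]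

set_option synthInstance.maxHeartbeats 1000000 in
lemma wedgeOver_eq_ιMulti {n k : ℕ} (v : Fin n → (Fin n → RatFunField n))
    (S : Finset (Fin n)) (hS : S.card = k) :
    wedgeOver v S
      = ExteriorAlgebra.ιMulti (RatFunField n) k (fun a => v (S.orderEmbOfFin hS a)) := by
  rw [ExteriorAlgebra.ιMulti_apply, wedgeOver]
  congr 1
  apply List.ext_getElem
  · simp [hS]
  · intro i h1 h2
    simp [Finset.orderEmbOfFin_apply]

end SchubertAux

set_option synthInstance.maxHeartbeats 1000000 in
set_option maxHeartbeats 4000000 in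
/-- For every `k`-element subset `I = {i_1 < ⋯ < i_k} ⊆ {1,…,n}`, in the
`k`-th exterior power of `F^n` (`F = ℚ(t_1,…,t_n)`) one has
`ε_{i_1} ∧ ⋯ ∧ ε_{i_k} = ∑_J det((∏_{c=1}^{i−1}(t_c − t_j))_{i∈I, j∈J}) • f̄_{j_1} ∧ ⋯ ∧ f̄_{j_k}`,
the sum being over all `k`-element subsets `J = {j_1 < ⋯ < j_k}` of `{1,…,n}`, where the
`k×k` determinant has rows indexed by `i ∈ I` and columns by `j ∈ J`, both in increasing
order.  (All indices are `0`-based, so `∏_{c=1}^{i−1}` becomes a product over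
`c ∈ Finset.Iio i`.) -/
theorem schubert_basis_in_fixed_point_basis (n k : ℕ)
    (I : Finset (Fin n)) (hI : I.card = k) :
    wedgeOver (fun i => Pi.single i 1) I =
      ∑ J : {J : Finset (Fin n) // J.card = k},
        (Matrix.det (Matrix.of fun a b : Fin k =>
            ∏ c ∈ Finset.Iio (I.orderEmbOfFin hI a),
              (tvar c - tvar ((J : Finset (Fin n)).orderEmbOfFin J.2 b)))) •
          wedgeOver fbar (J : Finset (Fin n)) := by
  classical
  set A : Fin n → Fin n → RatFunField n :=
    fun i j => ∏ c ∈ Finset.Iio i, (tvar c - tvar j) with hA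
  set eI := I.orderEmbOfFin hI with heI
  set f := ExteriorAlgebra.ιMulti (RatFunField n) k
    (M := Fin n → RatFunField n) with hf
  set T : (Fin k → Fin n) → ExteriorAlgebra (RatFunField n) (Fin n → RatFunField n) :=
    fun g => (∏ a, A (eI a) (g a)) • f (fun a => fbar (g a)) with hT
  -- Step 1: left side as a big sum over all functions
  have step1 : wedgeOver (fun i => Pi.single i 1) I = ∑ g : Fin k → Fin n, T g := by
    rw [SchubertAux.wedgeOver_eq_ιMulti _ I hI]
    have h1 : (fun a => Pi.single (eI a) (1 : RatFunField n))
        = fun a => ∑ j : Fin n, A (eI a) j • fbar j := by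
      funext a; exact SchubertAux.epsilon_eq (eI a)
    show f _ = _
    rw [h1]
    have h2 := f.toMultilinearMap.map_sum (α := fun _ : Fin k => Fin n)
      (g := fun a j => A (eI a) j • fbar j)
    simp only [AlternatingMap.coe_multilinearMap] at h2
    rw [h2]
    refine Finset.sum_congr rfl fun g _ => ?_
    have h3 := f.toMultilinearMap.map_smul_univ (fun a => A (eI a) (g a))
      (fun a => fbar (g a))
    simpa only [AlternatingMap.coe_multilinearMap] using h3
  -- Step 2: only injective functions contribute
  have step2 : ∑ g : Fin k → Fin n, T g
      = ∑ g ∈ Finset.univ.filter (fun g : Fin k → Fin n => Function.Injective g), T g := by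
    refine (Finset.sum_subset (Finset.filter_subset _ _) fun g _ hg => ?_).symm
    have hni : ¬ Function.Injective g := by
      intro h; exact hg (Finset.mem_filter.mpr ⟨Finset.mem_univ _, h⟩)
    obtain ⟨a, b, hab, hne⟩ := Function.not_injective_iff.mp hni
    have : f (fun a => fbar (g a)) = 0 := by
      refine AlternatingMap.map_eq_zero_of_not_injective _ _ ?_
      intro hinj
      exact hne (hinj (show fbar (g a) = fbar (g b) by rw [hab]))
    rw [hT]; simp [this]
  -- Step 3: regroup over (J, σ)
  have step3 : ∑ g ∈ Finset.univ.filter (fun g : Fin k → Fin n => Function.Injective g), T g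
      = ∑ p : {J : Finset (Fin n) // J.card = k} × Equiv.Perm (Fin k),
          T (fun a => (p.1 : Finset (Fin n)).orderEmbOfFin p.1.2 (p.2 a)) := by
    refine (Finset.sum_bij
      (i := fun (p : {J : Finset (Fin n) // J.card = k} × Equiv.Perm (Fin k)) _ =>
        fun a => (p.1 : Finset (Fin n)).orderEmbOfFin p.1.2 (p.2 a))
      ?_ ?_ ?_ ?_).symm
    · intro p _
      refine Finset.mem_filter.mpr ⟨Finset.mem_univ _, ?_⟩
      exact ((p.1 : Finset (Fin n)).orderEmbOfFin p.1.2).injective.comp p.2.injective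
    · intro p hp q hq hpq
      obtain ⟨⟨J1, h1⟩, σ1⟩ := p
      obtain ⟨⟨J2, h2⟩, σ2⟩ := q
      simp only [] at hpq
      have hJ : J1 = J2 := by
        have r1 : Set.range (fun a => J1.orderEmbOfFin h1 (σ1 a)) = (J1 : Set (Fin n)) := by
          rw [show (fun a => J1.orderEmbOfFin h1 (σ1 a)) = (J1.orderEmbOfFin h1) ∘ σ1 from rfl,
            Set.range_comp, Equiv.range_eq_univ, Set.image_univ, Finset.range_orderEmbOfFin]
        have r2 : Set.range (fun a => J2.orderEmbOfFin h2 (σ2 a)) = (J2 : Set (Fin n)) := by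
          rw [show (fun a => J2.orderEmbOfFin h2 (σ2 a)) = (J2.orderEmbOfFin h2) ∘ σ2 from rfl,
            Set.range_comp, Equiv.range_eq_univ, Set.image_univ, Finset.range_orderEmbOfFin]
        rw [hpq] at r1
        exact Finset.coe_injective (r1.symm.trans r2)
      subst hJ
      have hσ : σ1 = σ2 := by
        refine Equiv.ext fun a => ?_
        exact (J1.orderEmbOfFin h1).injective (congrFun hpq a)
      simp [hσ]
    · intro g hg
      have hginj : Function.Injective g := (Finset.mem_filter.mp hg).2
      set J := Finset.image g Finset.univ with hJdef
      have hJcard : J.card = k := by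
        rw [hJdef, Finset.card_image_of_injective _ hginj, Finset.card_univ,
          Fintype.card_fin]
      have hmem : ∀ a, g a ∈ J := fun a => Finset.mem_image_of_mem g (Finset.mem_univ a)
      set u : Fin k → Fin k := fun a => (J.orderIsoOfFin hJcard).symm ⟨g a, hmem a⟩ with hu
      have huinj : Function.Injective u := by
        intro a b h
        have := congrArg (J.orderIsoOfFin hJcard) h
        rw [(J.orderIsoOfFin hJcard).apply_symm_apply,
          (J.orderIsoOfFin hJcard).apply_symm_apply] at this
        exact hginj (Subtype.ext_iff.mp this)
      refine ⟨⟨⟨J, hJcard⟩, Equiv.ofBijective u (Finite.injective_iff_bijective.mp huinj)⟩,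
        Finset.mem_univ _, ?_⟩
      funext a
      show J.orderEmbOfFin hJcard (u a) = g a
      rw [← Finset.coe_orderIsoOfFin_apply, hu, (J.orderIsoOfFin hJcard).apply_symm_apply]
    · intro p _; rfl
  -- Step 4: inner sum over permutations gives the determinant
  have step4 : ∀ J : {J : Finset (Fin n) // J.card = k},
      ∑ σ : Equiv.Perm (Fin k),
          T (fun a => (J : Finset (Fin n)).orderEmbOfFin J.2 (σ a))
        = (Matrix.det (Matrix.of fun a b : Fin k =>
              A (eI a) ((J : Finset (Fin n)).orderEmbOfFin J.2 b))) •
            f (fun a => fbar ((J : Finset (Fin n)).orderEmbOfFin J.2 a)) := by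
    intro J
    set eJ := (J : Finset (Fin n)).orderEmbOfFin J.2 with heJ
    have hperm : ∀ σ : Equiv.Perm (Fin k),
        f (fun a => fbar (eJ (σ a)))
          = (((Equiv.Perm.sign σ : ℤ) : RatFunField n)) • f (fun a => fbar (eJ a)) := by
      intro σ
      have := AlternatingMap.map_perm f (fun a => fbar (eJ a)) σ
      rw [Function.comp_def] at this
      rw [this, Units.smul_def, Int.cast_smul_eq_zsmul]
    have : ∀ σ : Equiv.Perm (Fin k),
        T (fun a => eJ (σ a))
          = ((((Equiv.Perm.sign σ : ℤ) : RatFunField n)) * ∏ a, A (eI a) (eJ (σ a))) •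
              f (fun a => fbar (eJ a)) := by
      intro σ
      rw [hT]
      simp only []
      rw [hperm σ, smul_smul, mul_comm]
    rw [Finset.sum_congr rfl fun σ _ => this σ, ← Finset.sum_smul]
    congr 1
    rw [← Matrix.det_transpose, Matrix.det_apply']
    exact Finset.sum_congr rfl fun σ _ => rfl
  -- Conclusion
  rw [step1, step2, step3, Fintype.sum_prod_type]
  refine Finset.sum_congr rfl fun J _ => ?_
  rw [step4 J, SchubertAux.wedgeOver_eq_ιMulti fbar (J : Finset (Fin n)) J.2]


end
end

section
/- Let I = {i_1<⋯<i_k} and J = {j_1<⋯<j_k} be k-element subsets of {1,…,n}. If j_b < i_b for some 1 ≤ b ≤ k, then det((∏_{c=1}^{i−1}(t_c − t_j))_{i∈I, j∈J}) = 0 in ℤ[t_1,…,t_n], where the determinant is of the k×k matrix with rows indexed by i ∈ I in increasing order and columns by j ∈ J in increasing order. (Geometrically: the restriction σ_λ|_{p_J} of an equivariant Schubert class vanishes unless the fixed point p_J lies in the Schubert variety, i.e., unless j_b ≥ i_b for all b.) -/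
open scoped BigOperators

open MvPolynomial

/-- **vanishing of Schubert class restrictions.**
Let `I = {i_1<⋯<i_k}` and `J = {j_1<⋯<j_k}` be `k`-element subsets of `{1,…,n}`, encoded
`0`-based by strictly monotone maps `iI jJ : Fin k → Fin n`.  If `j_b < i_b` for some `b`,
then `det((∏_{c=1}^{i−1}(t_c − t_j))_{i∈I, j∈J}) = 0` in `ℤ[t_1,…,t_n]`, where the `k×k`
matrix has rows indexed by `i ∈ I` and columns by `j ∈ J`, each in increasing order.
(`0`-based, the variable `c : Fin n` is `t_{c+1}` and `∏_{c=1}^{i-1}` becomes a product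
over `c ∈ Finset.Iio (iI a)`.) -/
theorem schubert_restriction_vanishes (n k : ℕ)
    (iI jJ : Fin k → Fin n) (hiI : StrictMono iI) (hjJ : StrictMono jJ)
    (hlt : ∃ b : Fin k, jJ b < iI b) :
    Matrix.det (Matrix.of fun a b : Fin k =>
        ∏ c ∈ Finset.Iio (iI a), ((X c : MvPolynomial (Fin n) ℤ) - X (jJ b))) = 0 := by
  obtain ⟨b, hb⟩ := hlt
  rw [Matrix.det_apply]
  apply Finset.sum_eq_zero
  intro σ _
  have hex : ∃ i : Fin k, i ≤ b ∧ b ≤ σ i := by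
    by_contra h
    push_neg at h
    have hmaps : ∀ i ∈ Finset.Iic b, σ i ∈ Finset.Iio b := fun i hi =>
      Finset.mem_Iio.mpr (h i (Finset.mem_Iic.mp hi))
    have hcard := Finset.card_le_card_of_injOn σ hmaps σ.injective.injOn
    rw [Fin.card_Iic, Fin.card_Iio] at hcard
    omega
  obtain ⟨i, hib, hbσ⟩ := hex
  have hzero : (Matrix.of fun a b : Fin k =>
      ∏ c ∈ Finset.Iio (iI a), ((X c : MvPolynomial (Fin n) ℤ) - X (jJ b))) (σ i) i = 0 := by
    simp only [Matrix.of_apply]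
    apply Finset.prod_eq_zero (i := jJ i)
    · exact Finset.mem_Iio.mpr (lt_of_le_of_lt (hjJ.monotone hib)
        (lt_of_lt_of_le hb (hiI.monotone hbσ)))
    · exact sub_self _
  have hp : ∏ j : Fin k, (Matrix.of fun a b : Fin k =>
      ∏ c ∈ Finset.Iio (iI a), ((X c : MvPolynomial (Fin n) ℤ) - X (jJ b))) (σ j) j = 0 :=
    Finset.prod_eq_zero (Finset.mem_univ i) hzero
  rw [hp, smul_zero]
end

section
/- For all j ≥ 0 and all i ≥ 1: Ξ^j ε_i = Σ_{a=0}^{j} (−1)^a · h_a(t_i, t_{i+1}, …, t_{i+j−a}) · ε_{i+j−a}. -/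
open scoped BigOperators

noncomputable section

open MvPolynomial

/-- The ring `S = ℤ[t_1, t_2, t_3, …]`; the variable `c : ℕ` is `t_{c+1}`. -/
abbrev S8 : Type := MvPolynomial ℕ ℤ

/-- The complete homogeneous symmetric polynomial of degree `a` in the variables `t_c`
for `c ∈ s`: the sum of all monomials of total degree `a` in those variables
(one for each multiset of size `a` with elements in `s`), with `h_0 = 1`. -/
noncomputable def hsymm (s : Finset ℕ) (a : ℕ) : S8 :=
  ∑ mu ∈ s.sym a, ((mu : Multiset ℕ).map X).prod

lemma hs0 (s : Finset ℕ) : _root_.hsymm s 0 = 1 := by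
  simp only [_root_.hsymm, Finset.sym_zero, Finset.sum_singleton]
  rfl

lemma hsEmpty (a : ℕ) : _root_.hsymm (∅ : Finset ℕ) (a + 1) = 0 := by
  simp [_root_.hsymm]

lemma hsInsert (x : ℕ) (s : Finset ℕ) (hx : x ∉ s) (a : ℕ) :
    _root_.hsymm (insert x s) (a + 1) = _root_.hsymm s (a + 1) + X x * _root_.hsymm (insert x s) a := by
  classical
  unfold _root_.hsymm
  rw [← Finset.sum_filter_add_sum_filter_not ((insert x s).sym (a+1)) (fun mu => x ∉ mu)]
  congr 1
  · refine Finset.sum_congr ?_ (fun _ _ => rfl)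
    ext mu
    simp only [Finset.mem_filter, Finset.mem_sym_iff, Finset.mem_insert]
    constructor
    · rintro ⟨h1, h2⟩ b hb
      rcases h1 b hb with rfl | hb'
      · exact absurd hb h2
      · exact hb'
    · intro h
      exact ⟨fun b hb => Or.inr (h b hb), fun hxmu => hx (h x hxmu)⟩
  · rw [Finset.mul_sum]
    refine (Finset.sum_bij' (fun mu hmu => x ::ₛ mu) (fun mu hmu => mu.erase x
      (not_not.1 (Finset.mem_filter.1 hmu).2)) ?_ ?_ ?_ ?_ ?_).symm
    · intro mu hmu
      rw [Finset.mem_filter]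
      refine ⟨Finset.mem_sym_iff.2 fun b hb => ?_, not_not.2 (Sym.mem_cons_self _ _)⟩
      rcases Sym.mem_cons.1 hb with rfl | hb
      · exact Finset.mem_insert_self _ _
      · exact Finset.mem_sym_iff.1 hmu _ hb
    · intro mu hmu
      rw [Finset.mem_sym_iff]
      intro b hb
      exact Finset.mem_sym_iff.1 (Finset.mem_filter.1 hmu).1 _
        (Multiset.mem_of_mem_erase hb)
    · intro mu hmu
      exact Sym.erase_cons_head _ _
    · intro mu hmu
      exact Sym.cons_erase _
    · intro mu hmu
      rw [Sym.coe_cons, Multiset.map_cons, Multiset.prod_cons]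


lemma hsIcc (m n a : ℕ) (h : m ≤ n) :
    _root_.hsymm (Finset.Icc m (n + 1)) (a + 1)
      = _root_.hsymm (Finset.Icc m n) (a + 1)
        + X (n + 1) * _root_.hsymm (Finset.Icc m (n + 1)) a := by
  have h1 : Finset.Icc m (n + 1) = insert (n + 1) (Finset.Icc m n) :=
    (Finset.insert_Icc_right_eq_Icc_add_one (by omega)).symm
  have h2 : n + 1 ∉ Finset.Icc m n := by simp
  rw [h1, hsInsert _ _ h2]

lemma hsSingleton (m a : ℕ) :
    _root_.hsymm (Finset.Icc m m) (a + 1) = X m * _root_.hsymm (Finset.Icc m m) a := by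
  have h1 : Finset.Icc m m = insert m (∅ : Finset ℕ) := by
    ext x; simp
  rw [h1, hsInsert _ _ (Finset.notMem_empty m), hsEmpty, zero_add]

lemma key (j m : ℕ) :
    ((∑ a ∈ Finset.range (j + 1),
        ((-1 : S8) ^ a * _root_.hsymm (Finset.Icc m (m + j - a)) a) •
          Finsupp.single (m + j - a + 1) (1 : S8)) -
      ∑ a ∈ Finset.range (j + 1),
        ((-1 : S8) ^ a * _root_.hsymm (Finset.Icc m (m + j - a)) a * X (m + j - a)) •
          Finsupp.single (m + j - a) (1 : S8)) =
    ∑ a ∈ Finset.range (j + 1 + 1),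
      ((-1 : S8) ^ a * _root_.hsymm (Finset.Icc m (m + (j + 1) - a)) a) •
        Finsupp.single (m + (j + 1) - a) (1 : S8) := by
  simp only [← add_assoc]
  conv_rhs => rw [Finset.sum_range_succ' _ (j + 1), Finset.sum_range_succ _ j]
  conv_lhs => rw [Finset.sum_range_succ' _ j]
  conv_lhs => rw [Finset.sum_range_succ _ j]
  simp only [Nat.add_sub_add_right, Nat.add_sub_cancel, Nat.sub_zero, hs0, mul_one,
    pow_zero, one_mul, one_smul]
  have hG : (∑ a ∈ Finset.range j,
        ((-1 : S8) ^ (a + 1) * _root_.hsymm (Finset.Icc m (m + j - a)) (a + 1)) •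
          Finsupp.single (m + j - a) (1 : S8))
      = (∑ a ∈ Finset.range j,
          ((-1 : S8) ^ (a + 1) * _root_.hsymm (Finset.Icc m (m + j - (a + 1))) (a + 1)) •
            Finsupp.single (m + j - (a + 1) + 1) (1 : S8))
        - ∑ a ∈ Finset.range j,
            ((-1 : S8) ^ a * _root_.hsymm (Finset.Icc m (m + j - a)) a * X (m + j - a)) •
              Finsupp.single (m + j - a) (1 : S8) := by
    rw [← Finset.sum_sub_distrib]
    refine Finset.sum_congr rfl fun a ha => ?_
    have hlt : a < j := Finset.mem_range.1 ha
    obtain ⟨n, hn, hmn⟩ : ∃ n, m + j - a = n + 1 ∧ m ≤ n := ⟨m + j - a - 1, by omega, by omega⟩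
    have e1 : m + j - (a + 1) = n := by omega
    have e2 : m + j - (a + 1) + 1 = n + 1 := by omega
    rw [hn, e1, hsIcc m n a hmn, ← sub_smul]
    congr 1
    ring
  have hQ : ((-1 : S8) ^ (j + 1) * _root_.hsymm (Finset.Icc m m) (j + 1))
      = -((-1 : S8) ^ j * _root_.hsymm (Finset.Icc m m) j * X m) := by
    rw [hsSingleton]
    ring
  rw [hG, hQ, neg_smul]
  abel

/-- Let `M` be the free `S`-module with basis `(ε_m)_{m ≥ 1}` and `Ξ` the
`S`-linear endomorphism with `Ξ ε_m = ε_{m+1} − t_m ε_m`.  Then for all `j ≥ 0`, `i ≥ 1`: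
`Ξ^j ε_i = ∑_{a=0}^{j} (−1)^a h_a(t_i, …, t_{i+j−a}) ε_{i+j−a}`.
(Here everything is `0`-based: the basis vector `Finsupp.single m 1` is `ε_{m+1}`, the
variable `X c` is `t_{c+1}`, and `h_a(t_i,…,t_{i+j−a})` becomes
`hsymm (Finset.Icc m (m+j−a)) a` with `m = i − 1`.) -/
theorem xi_power_on_basis
    (Ξ : (ℕ →₀ S8) →ₗ[S8] (ℕ →₀ S8))
    (hΞ : ∀ m : ℕ, Ξ (Finsupp.single m (1 : S8)) =
      Finsupp.single (m + 1) (1 : S8) - (X m : S8) • Finsupp.single m (1 : S8)) :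
    ∀ (j m : ℕ),
      (Ξ ^ j) (Finsupp.single m (1 : S8)) =
        ∑ a ∈ Finset.range (j + 1),
          ((-1 : S8) ^ a * hsymm (Finset.Icc m (m + j - a)) a) •
            Finsupp.single (m + j - a) (1 : S8) := by
  intro j
  induction j with
  | zero =>
    intro m
    rw [pow_zero]
    simp only [zero_add, Finset.sum_range_one, Nat.sub_zero, Nat.add_zero, pow_zero, hs0, mul_one,
      one_smul, Module.End.one_apply]
  | succ j ih =>
    intro m
    rw [pow_succ', Module.End.mul_apply, ih, map_sum]
    simp only [map_smul, hΞ, smul_sub, smul_smul]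
    rw [Finset.sum_sub_distrib]
    exact key j m

end
end

section
/- ψ ∘ Ξ = ξ_{q,t} ∘ ψ as S-linear maps M → N. (This identifies multiplication by the hyperplane class on the equivariant cohomology of infinite projective space, after cyclic specialization of the equivariant parameters modulo n, with equivariant quantum multiplication by the hyperplane class on QH_T^*ℙ^{n−1}.) -/
/-!
Write `m = sn + i` with `1 ≤ i ≤ n`. Then `ψ` sends `ε_{m+1}` to `q^s σ(ε_i)`, where
`σ = ξ_{q,t} + t` is the cyclic shift `ε_i ↦ ε_{i+1}` that picks up a factor `q` when it wraps
around from `ε_n` to `ε_1`. Hence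
`ψ Ξ ε_m = q^s σ(ε_i) - t_i q^s ε_i = q^s ξ_{q,t}(ε_i) = ξ_{q,t} ψ ε_m`,
and two `S`-linear maps that agree on the basis `(ε_m)` of `M` are equal.
-/

open Polynomial

namespace Nat

theorem add_one_mod_of_mod_add_one_lt {m n : ℕ} (h : m % n + 1 < n) :
    (m + 1) % n = m % n + 1 := by
  rw [← Nat.mod_add_mod, Nat.mod_eq_of_lt h]

theorem add_one_div_of_mod_add_one_lt {m n : ℕ} (h : m % n + 1 < n) : (m + 1) / n = m / n :=
  Nat.succ_div_of_not_dvd fun hd => by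
    rw [Nat.dvd_iff_mod_eq_zero, add_one_mod_of_mod_add_one_lt h] at hd
    exact Nat.succ_ne_zero _ hd

theorem add_one_mod_of_mod_add_one_eq {m n : ℕ} (h : m % n + 1 = n) : (m + 1) % n = 0 := by
  rw [← Nat.mod_add_mod, h, Nat.mod_self]

theorem add_one_div_of_mod_add_one_eq {m n : ℕ} (h : m % n + 1 = n) : (m + 1) / n = m / n + 1 :=
  Nat.succ_div_of_dvd (Nat.dvd_of_mod_eq_zero (add_one_mod_of_mod_add_one_eq h))

end Nat

theorem Polynomial.C_smul_eq_smul {R M : Type*} [CommSemiring R] [AddCommMonoid M] [Module R M]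
    [Module R[X] M] [IsScalarTower R R[X] M] (r : R) (v : M) : C r • v = r • v := by
  rw [← Polynomial.algebraMap_eq, algebraMap_smul]

section Chevalley

variable {R : Type*} [CommRing R] {n : ℕ} {t : Fin n → R}
  {ξ : (Fin n → R[X]) →ₗ[R[X]] (Fin n → R[X])} {ψ : (ℕ →₀ R) →ₗ[R] (Fin n → R[X])}

theorem map_single_add_one_eq_pow_smul_shift (hn : 0 < n)
    (hξ : ∀ i : Fin n, (h : (i : ℕ) + 1 < n) →
      ξ (Pi.single i 1) = Pi.single ⟨i + 1, h⟩ 1 - C (t i) • Pi.single i 1)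
    (hξlast : ξ (Pi.single ⟨n - 1, Nat.sub_one_lt_of_lt hn⟩ 1) =
      (X : R[X]) • Pi.single ⟨0, hn⟩ 1 -
        C (t ⟨n - 1, Nat.sub_one_lt_of_lt hn⟩) • Pi.single ⟨n - 1, Nat.sub_one_lt_of_lt hn⟩ 1)
    (hψ : ∀ m : ℕ, ψ (Finsupp.single m 1) =
      (X : R[X]) ^ (m / n) • Pi.single ⟨m % n, Nat.mod_lt m hn⟩ 1)
    (m : ℕ) :
    ψ (Finsupp.single (m + 1) 1) = (X : R[X]) ^ (m / n) •
      (ξ (Pi.single ⟨m % n, Nat.mod_lt m hn⟩ 1) +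
        C (t ⟨m % n, Nat.mod_lt m hn⟩) • Pi.single ⟨m % n, Nat.mod_lt m hn⟩ 1) := by
  rw [hψ]
  by_cases hlt : m % n + 1 < n
  · have hi : (⟨(m + 1) % n, Nat.mod_lt _ hn⟩ : Fin n) = ⟨m % n + 1, hlt⟩ :=
      Fin.ext (Nat.add_one_mod_of_mod_add_one_lt hlt)
    rw [hξ _ hlt, sub_add_cancel, hi, Nat.add_one_div_of_mod_add_one_lt hlt]
  · have hlast : m % n + 1 = n := by have := Nat.mod_lt m hn; omega
    have hi : (⟨m % n, Nat.mod_lt m hn⟩ : Fin n) = ⟨n - 1, Nat.sub_one_lt_of_lt hn⟩ :=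
      Fin.ext (Nat.eq_sub_of_add_eq hlast)
    have hi' : (⟨(m + 1) % n, Nat.mod_lt _ hn⟩ : Fin n) = ⟨0, hn⟩ :=
      Fin.ext (Nat.add_one_mod_of_mod_add_one_eq hlast)
    rw [hi, hξlast, sub_add_cancel, hi', Nat.add_one_div_of_mod_add_one_eq hlast, pow_succ,
      mul_smul]

theorem comp_chevalley_eq_chevalley_comp (hn : 0 < n)
    {Ξ : (ℕ →₀ R) →ₗ[R] (ℕ →₀ R)}
    (hΞ : ∀ m : ℕ, Ξ (Finsupp.single m 1) =
      Finsupp.single (m + 1) 1 - t ⟨m % n, Nat.mod_lt m hn⟩ • Finsupp.single m 1)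
    (hξ : ∀ i : Fin n, (h : (i : ℕ) + 1 < n) →
      ξ (Pi.single i 1) = Pi.single ⟨i + 1, h⟩ 1 - C (t i) • Pi.single i 1)
    (hξlast : ξ (Pi.single ⟨n - 1, Nat.sub_one_lt_of_lt hn⟩ 1) =
      (X : R[X]) • Pi.single ⟨0, hn⟩ 1 -
        C (t ⟨n - 1, Nat.sub_one_lt_of_lt hn⟩) • Pi.single ⟨n - 1, Nat.sub_one_lt_of_lt hn⟩ 1)
    (hψ : ∀ m : ℕ, ψ (Finsupp.single m 1) =
      (X : R[X]) ^ (m / n) • Pi.single ⟨m % n, Nat.mod_lt m hn⟩ 1) :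
    ψ ∘ₗ Ξ = ξ.restrictScalars R ∘ₗ ψ := by
  refine Finsupp.basisSingleOne.ext fun m => ?_
  simp only [Finsupp.coe_basisSingleOne, LinearMap.coe_comp, Function.comp_apply,
    LinearMap.coe_restrictScalars]
  rw [hΞ, map_sub, map_smul, map_single_add_one_eq_pow_smul_shift hn hξ hξlast hψ, hψ, map_smul,
    ← C_smul_eq_smul (t _), smul_comm (C _) (X ^ _), ← smul_sub, add_sub_cancel_right]

end Chevalley

open MvPolynomial

/-- Indices are `0`-based: `Finsupp.single m 1 = ε_{m+1}`, `Pi.single i 1 = ε_{i+1}`,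
`X i = t_{i+1}` and `q = Polynomial.X`. -/
theorem psi_intertwines_chevalley (n : ℕ) (hn : 0 < n)
    (Ξ : (ℕ →₀ MvPolynomial (Fin n) ℤ) →ₗ[MvPolynomial (Fin n) ℤ]
          (ℕ →₀ MvPolynomial (Fin n) ℤ))
    (hΞ : ∀ m : ℕ, Ξ (Finsupp.single m (1 : MvPolynomial (Fin n) ℤ)) =
      Finsupp.single (m + 1) (1 : MvPolynomial (Fin n) ℤ) -
        (X (⟨m % n, Nat.mod_lt m hn⟩ : Fin n) : MvPolynomial (Fin n) ℤ) •
          Finsupp.single m (1 : MvPolynomial (Fin n) ℤ))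
    (ξqt : (Fin n → Polynomial (MvPolynomial (Fin n) ℤ))
        →ₗ[Polynomial (MvPolynomial (Fin n) ℤ)]
          (Fin n → Polynomial (MvPolynomial (Fin n) ℤ)))
    (hξ : ∀ i : Fin n, (h : (i : ℕ) + 1 < n) →
      ξqt (Pi.single i (1 : Polynomial (MvPolynomial (Fin n) ℤ))) =
        Pi.single (⟨(i : ℕ) + 1, h⟩ : Fin n) (1 : Polynomial (MvPolynomial (Fin n) ℤ)) -
          Polynomial.C (X i : MvPolynomial (Fin n) ℤ) •
            (Pi.single i (1 : Polynomial (MvPolynomial (Fin n) ℤ)) :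
              Fin n → Polynomial (MvPolynomial (Fin n) ℤ)))
    (hξlast : ξqt (Pi.single (⟨n - 1, by omega⟩ : Fin n)
          (1 : Polynomial (MvPolynomial (Fin n) ℤ))) =
        (Polynomial.X : Polynomial (MvPolynomial (Fin n) ℤ)) •
          (Pi.single (⟨0, hn⟩ : Fin n)
            (1 : Polynomial (MvPolynomial (Fin n) ℤ)) :
              Fin n → Polynomial (MvPolynomial (Fin n) ℤ)) -
          Polynomial.C (X (⟨n - 1, by omega⟩ : Fin n) : MvPolynomial (Fin n) ℤ) •
            (Pi.single (⟨n - 1, by omega⟩ : Fin n)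
              (1 : Polynomial (MvPolynomial (Fin n) ℤ)) :
                Fin n → Polynomial (MvPolynomial (Fin n) ℤ)))
    (ψ : (ℕ →₀ MvPolynomial (Fin n) ℤ) →ₗ[MvPolynomial (Fin n) ℤ]
          (Fin n → Polynomial (MvPolynomial (Fin n) ℤ)))
    (hψ : ∀ m : ℕ, ψ (Finsupp.single m (1 : MvPolynomial (Fin n) ℤ)) =
      (Polynomial.X : Polynomial (MvPolynomial (Fin n) ℤ)) ^ (m / n) •
        (Pi.single (⟨m % n, Nat.mod_lt m hn⟩ : Fin n)
          (1 : Polynomial (MvPolynomial (Fin n) ℤ)) :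
            Fin n → Polynomial (MvPolynomial (Fin n) ℤ))) :
    ∀ x : ℕ →₀ MvPolynomial (Fin n) ℤ, ψ (Ξ x) = ξqt (ψ x) :=
  LinearMap.congr_fun (comp_chevalley_eq_chevalley_comp hn hΞ hξ hξlast hψ)
end

section
/- The kernel of Ψ is exactly the S-submodule of ⋀^k_S M spanned by the following elements: (1) ε_I for every k-element set I = {m_1<⋯<m_k} of positive integers whose residues r(m_1),…,r(m_k) modulo n are not pairwise distinct; and (2) sgn(u)·ε_I − sgn(u')·ε_{I'} for every pair of k-element sets I, I' of positive integers each having pairwise distinct residues modulo n, with the same multiset of residues and with Σ_{m∈I} m = Σ_{m∈I'} m, where u (respectively u') is the permutation sorting the sequence of residues of the increasingly-listed elements of I (respectively I') into increasing order. (This computes the kernel of the equivariant rim-hook reduction map.) -/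
open scoped BigOperators

noncomputable section

open MvPolynomial

/-- `S = ℚ[t_1,…,t_n]` (the variable `X i` is `t_{i+1}`, `0`-based). -/
abbrev S10 (n : ℕ) : Type := MvPolynomial (Fin n) ℚ

/-- `S[q]`. -/
abbrev SQ10 (n : ℕ) : Type := Polynomial (S10 n)

/-- The free `S`-module `M` with basis `(ε_m)_{m ≥ 1}`; `0`-based, the basis vector
`Finsupp.single m 1` is `ε_{m+1}`. -/
abbrev M10 (n : ℕ) : Type := ℕ →₀ S10 n

/-- `N = S[q]^n` with basis `ε_1,…,ε_n` (`0`-based). -/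
abbrev N10 (n : ℕ) : Type := Fin n → SQ10 n

set_option synthInstance.maxHeartbeats 1000000 in
/-- `ε_I = ε_{m_1+1} ∧ ⋯ ∧ ε_{m_k+1}` as an element of the `k`-th exterior power
`⋀[S]^k M`, for a `k`-element set of nonnegative integers encoded by `m : Fin k → ℕ`. -/
noncomputable def epsI (n k : ℕ) (m : Fin k → ℕ) : (⋀[S10 n]^k (M10 n)) :=
  ⟨ExteriorAlgebra.ιMulti (S10 n) k (fun a => Finsupp.single (m a) (1 : S10 n)),
    ExteriorAlgebra.ιMulti_range (S10 n) k (Set.mem_range_self _)⟩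

set_option synthInstance.maxHeartbeats 1000000 in
/-- The generators of the kernel of the rim-hook reduction map `Ψ`:
(1) `ε_I` for `I` whose residues mod `n` are not pairwise distinct; and
(2) `sgn(u)·ε_I − sgn(u')·ε_{I'}` for pairs `I, I'` with pairwise distinct residues,
the same multiset of residues mod `n`, and the same element sum, where `u` (resp. `u'`)
is the permutation sorting the residues of `I` (resp. `I'`) into increasing order. -/
def kerGens (n k : ℕ) : Set (⋀[S10 n]^k (M10 n)) :=
  {x | ∃ m : Fin k → ℕ, StrictMono m ∧
        ¬ Function.Injective (fun a => m a % n) ∧ x = epsI n k m} ∪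
  {x | ∃ m m' : Fin k → ℕ, ∃ u u' : Equiv.Perm (Fin k),
        StrictMono m ∧ StrictMono m' ∧
        Function.Injective (fun a => m a % n) ∧
        Function.Injective (fun a => m' a % n) ∧
        Multiset.map (fun a => m a % n) Finset.univ.val =
          Multiset.map (fun a => m' a % n) Finset.univ.val ∧
        (∑ a, m a) = (∑ a, m' a) ∧
        StrictMono (fun a => m (u a) % n) ∧
        StrictMono (fun a => m' (u' a) % n) ∧
        x = (Equiv.Perm.sign u : ℤ) • epsI n k m -
              (Equiv.Perm.sign u' : ℤ) • epsI n k m'}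

/-!
Write `ζ = (-1)^(k-1) q` and, for `I = {m_1 < ⋯ < m_k}`, `d(I) = ∑ ⌊m_a / n⌋`. Then `Ψ ε_I` is
`ζ^d(I)` times the wedge of the `ε_{r(m_a)}`: it vanishes when residues repeat, and otherwise it
is `± ζ^d(I) ε_J` for the sorted residue set `J`. Hence the generators lie in the kernel.
Conversely, for pairwise distinct residues `(J, d(I))` determines the multiset of residues and
`∑ m_a`, so modulo the generators every `ε_I` is `±` one canonical `ε_{I(J,d)}`. Their images
`ζ^d ε_J` are `S`-linearly independent, because the `ε_J` form an `S[q]`-basis of `⋀^k N` and the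
`q^d` an `S`-basis of `S[q]`; so `Ψ` is injective on the span of the canonical elements, and the
modular law gives `ker Ψ = span`.
-/

open Function
open scoped Polynomial

namespace RimHook

theorem strictMono_eq_of_map_univ_eq {β : Type*} [LinearOrder β] {k : ℕ} {f g : Fin k → β}
    (hf : StrictMono f) (hg : StrictMono g)
    (h : Multiset.map f Finset.univ.val = Multiset.map g Finset.univ.val) : f = g := by
  refine (hf.range_inj hg).mp (Set.ext fun x => ?_)
  simpa using congrArg (x ∈ ·) h

theorem strictMono_comp_sort {α : Type*} [LinearOrder α] {k : ℕ} {f : Fin k → α}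
    (hf : Injective f) : StrictMono (f ∘ Tuple.sort f) :=
  (Tuple.monotone_sort f).strictMono_of_injective (hf.comp (Equiv.injective _))

theorem sum_eq_iff_sum_div_eq {ι : Type*} (s : Finset ι) {n : ℕ} (hn : 0 < n) {f g : ι → ℕ}
    (hmod : ∑ i ∈ s, f i % n = ∑ i ∈ s, g i % n) :
    ∑ i ∈ s, f i = ∑ i ∈ s, g i ↔ ∑ i ∈ s, f i / n = ∑ i ∈ s, g i / n := by
  have hsum (h : ι → ℕ) : n * ∑ i ∈ s, h i / n + ∑ i ∈ s, h i % n = ∑ i ∈ s, h i := by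
    rw [Finset.mul_sum, ← Finset.sum_add_distrib]
    exact Finset.sum_congr rfl fun i _ => Nat.div_add_mod (h i) n
  rw [← hsum f, ← hsum g, hmod, Nat.add_right_cancel_iff, Nat.mul_left_cancel_iff hn]

theorem eq_of_le_of_sup_eq_top_of_disjoint {α : Type*} [Lattice α] [BoundedOrder α]
    [IsModularLattice α] {a b c : α} (hab : a ≤ b) (hac : a ⊔ c = ⊤) (hcb : Disjoint c b) :
    b = a :=
  (eq_of_le_of_inf_le_of_sup_le hab (by rw [hcb.symm.eq_bot]; exact bot_le)
    (by rw [hac]; exact le_top)).symm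

theorem map_univ_val_comp_perm {α β : Type*} [Fintype α] (f : α → β) (σ : Equiv.Perm α) :
    Multiset.map (f ∘ σ) Finset.univ.val = Multiset.map f Finset.univ.val := by
  rw [← Multiset.map_map, Multiset.map_univ_val_equiv]

theorem linearIndependent_pow_smul_basis {R A ι : Type*} [CommRing R] [AddCommGroup A]
    [Module R[X] A] [Module R A] [IsScalarTower R R[X] A] (u : Rˣ) (b : Module.Basis ι R[X] A) :
    LinearIndependent R
      (fun p : ℕ × ι => (Polynomial.C (u : R) * Polynomial.X) ^ p.1 • b p.2) := by
  convert ((Polynomial.basisMonomials R).smulTower b).linearIndependent.units_smul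
    (fun p => u ^ p.1) using 1
  ext p
  simp only [Pi.smul_apply', Module.Basis.smulTower_apply, Polynomial.coe_basisMonomials]
  rw [Polynomial.monomial_one_right_eq_X_pow, ← smul_assoc, Units.smul_def,
    Polynomial.smul_eq_C_mul, mul_pow, ← map_pow, Units.val_pow_eq_pow_val]

variable {n k : ℕ}

def residues (hn : 0 < n) (m : Fin k → ℕ) : Fin k → Fin n :=
  fun a => ⟨m a % n, Nat.mod_lt _ hn⟩

theorem injective_residues_iff (hn : 0 < n) (m : Fin k → ℕ) :
    Injective (residues hn m) ↔ Injective (fun a => m a % n) :=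
  (Injective.of_comp_iff Fin.val_injective (residues hn m)).symm

def epsN (n k : ℕ) (f : Fin k → Fin n) : ⋀[SQ10 n]^k (N10 n) :=
  exteriorPower.ιMulti (SQ10 n) k (fun a => Pi.single (f a) 1)

theorem epsN_comp_perm (f : Fin k → Fin n) (σ : Equiv.Perm (Fin k)) :
    epsN n k (f ∘ σ) = σ.sign • epsN n k f :=
  (exteriorPower.ιMulti (SQ10 n) k).map_perm (fun a => Pi.single (f a) 1) σ

theorem epsN_eq_zero_of_not_injective {f : Fin k → Fin n} (hf : ¬ Injective f) :
    epsN n k f = 0 :=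
  (exteriorPower.ιMulti (SQ10 n) k).map_eq_zero_of_not_injective _
    fun h => hf fun a b hab => h (by simp only [hab])

theorem epsI_eq_ιMulti (m : Fin k → ℕ) :
    epsI n k m = exteriorPower.ιMulti (S10 n) k (fun a => Finsupp.single (m a) 1) :=
  rfl

theorem apply_epsI (hn : 0 < n) {ζ : SQ10 n} (ψ' : M10 n →ₗ[S10 n] N10 n)
    (hψ : ∀ m : ℕ, ψ' (Finsupp.single m 1) =
      ζ ^ (m / n) • (Pi.single (⟨m % n, Nat.mod_lt m hn⟩ : Fin n) 1 : N10 n))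
    (Ψ : ⋀[S10 n]^k (M10 n) →+ ⋀[SQ10 n]^k (N10 n))
    (hΨ : ∀ v : Fin k → M10 n,
      Ψ (exteriorPower.ιMulti (S10 n) k v) = exteriorPower.ιMulti (SQ10 n) k (ψ' ∘ v))
    (m : Fin k → ℕ) :
    Ψ (epsI n k m) = ζ ^ (∑ a, m a / n) • epsN n k (residues hn m) := by
  rw [epsI_eq_ιMulti, hΨ, ← Finset.prod_pow_eq_pow_sum, epsN,
    ← AlternatingMap.map_smul_univ]
  exact congrArg _ (funext fun a => hψ (m a))

/-- The representative of the residue set `e` and the quotient sum `∑ a, m a / n = d`: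
all `d` multiples of `n` go on the last entry. -/
def canonTuple (n k : ℕ) (e : Fin k ↪o Fin n) (d : ℕ) : Fin k → ℕ :=
  fun a => e a + if (a : ℕ) + 1 = k then n * d else 0

theorem residues_canonTuple (hn : 0 < n) (e : Fin k ↪o Fin n) (d : ℕ) :
    residues hn (canonTuple n k e d) = e := by
  funext a
  ext
  simp only [residues, canonTuple]
  split_ifs <;> simp [Nat.mod_eq_of_lt]

theorem strictMono_canonTuple (e : Fin k ↪o Fin n) (d : ℕ) :
    StrictMono (canonTuple n k e d) := by
  intro a b hab
  have hlast : ¬ (a : ℕ) + 1 = k := by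
    have := b.isLt; have := Fin.lt_def.mp hab; omega
  have hlt : (e a : ℕ) < e b := e.strictMono hab
  simp only [canonTuple, if_neg hlast]
  omega

theorem sum_canonTuple_div (hn : 0 < n) (hk : 0 < k) (e : Fin k ↪o Fin n) (d : ℕ) :
    ∑ a, canonTuple n k e d a / n = d := by
  have hterm (a : Fin k) :
      canonTuple n k e d a / n = if a = ⟨k - 1, by omega⟩ then d else 0 := by
    have hlast : (a : ℕ) + 1 = k ↔ a = ⟨k - 1, by omega⟩ := by
      rw [Fin.ext_iff]; have := a.isLt; dsimp only; omega
    simp only [canonTuple, ← hlast]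
    split_ifs <;> simp [Nat.add_mul_div_left _ _ hn, Nat.div_eq_of_lt (e a).isLt]
  simp [hterm]

def canonEps (n k : ℕ) (p : ℕ × (Fin k ↪o Fin n)) : ⋀[S10 n]^k (M10 n) :=
  epsI n k (canonTuple n k p.2 p.1)

open Submodule in
theorem epsI_mem_span_kerGens_sup (hn : 0 < n) (hk : 0 < k) {m : Fin k → ℕ}
    (hm : StrictMono m) :
    epsI n k m ∈ span (S10 n) (kerGens n k) ⊔ span (S10 n) (Set.range (canonEps n k)) := by
  by_cases hinj : Injective (fun a => m a % n)
  swap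
  · exact mem_sup_left (subset_span (Or.inl ⟨m, hm, hinj, rfl⟩))
  set u := Tuple.sort (fun a => m a % n)
  have hu : StrictMono (fun a => m (u a) % n) := strictMono_comp_sort hinj
  let e : Fin k ↪o Fin n := OrderEmbedding.ofStrictMono (residues hn m ∘ u) fun _ _ h => hu h
  set d := ∑ a, m a / n
  set c := canonTuple n k e d
  have hc : (fun a => c a % n) = fun a => m (u a) % n :=
    funext fun a => congrArg Fin.val (congrFun (residues_canonTuple hn e d) a)
  have hmod : ∑ a, m a % n = ∑ a, c a % n := by
    rw [hc, ← Equiv.sum_comp u (fun a => m a % n)]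
  have hgen : (u.sign : ℤ) • epsI n k m - ((1 : Equiv.Perm (Fin k)).sign : ℤ) • epsI n k c ∈
      kerGens n k := by
    refine Or.inr ⟨m, c, u, 1, hm, strictMono_canonTuple e d, hinj, ?_, ?_, ?_, hu, ?_, rfl⟩
    · rw [hc]; exact hu.injective
    · rw [hc]; exact (map_univ_val_comp_perm (fun a => m a % n) u).symm
    · exact (sum_eq_iff_sum_div_eq _ hn hmod).mpr (sum_canonTuple_div hn hk e d).symm
    · simpa only [Equiv.Perm.one_apply, hc] using hu
  have hsplit : epsI n k m = (u.sign : ℤ) • ((u.sign : ℤ) • epsI n k m -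
      ((1 : Equiv.Perm (Fin k)).sign : ℤ) • epsI n k c) + (u.sign : ℤ) • canonEps n k (d, e) := by
    rw [Equiv.Perm.sign_one, Units.val_one, one_smul, smul_sub, smul_smul, ← Units.val_mul,
      Int.units_mul_self, Units.val_one, one_smul, canonEps, sub_add_cancel]
  rw [hsplit]
  exact add_mem (mem_sup_left (zsmul_mem (subset_span hgen) _))
    (mem_sup_right (zsmul_mem (subset_span (Set.mem_range_self (d, e))) _))

theorem span_kerGens_sup_span_canonEps (hn : 0 < n) (hk : 0 < k) :
    Submodule.span (S10 n) (kerGens n k) ⊔ Submodule.span (S10 n) (Set.range (canonEps n k)) =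
      ⊤ := by
  rw [eq_top_iff, ← (Finsupp.basisSingleOne.exteriorPower k).span_eq, Submodule.span_le]
  rintro _ ⟨s, rfl⟩
  rw [exteriorPower.basis_apply]
  exact epsI_mem_span_kerGens_sup hn hk (Set.powersetCard.ofFinEmbEquiv.symm s).strictMono

section LinearMap

variable (hn : 0 < n) {ζ : SQ10 n} (Φ : ⋀[S10 n]^k (M10 n) →ₗ[S10 n] ⋀[SQ10 n]^k (N10 n))

theorem sign_smul_apply_epsI
    (hΦ : ∀ m, Φ (epsI n k m) = ζ ^ (∑ a, m a / n) • epsN n k (residues hn m))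
    (m : Fin k → ℕ) (σ : Equiv.Perm (Fin k)) :
    (σ.sign : ℤ) • Φ (epsI n k m) = ζ ^ (∑ a, m a / n) • epsN n k (residues hn m ∘ σ) := by
  rw [hΦ, epsN_comp_perm, smul_comm, Units.smul_def]

theorem span_kerGens_le_ker
    (hΦ : ∀ m, Φ (epsI n k m) = ζ ^ (∑ a, m a / n) • epsN n k (residues hn m)) :
    Submodule.span (S10 n) (kerGens n k) ≤ LinearMap.ker Φ := by
  rw [Submodule.span_le]
  rintro _ (⟨m, -, hinj, rfl⟩ | ⟨m, m', u, u', -, -, -, -, hmult, hsum, hu, hu', rfl⟩)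
  · rw [SetLike.mem_coe, LinearMap.mem_ker, hΦ,
      epsN_eq_zero_of_not_injective ((injective_residues_iff hn m).not.mpr hinj), smul_zero]
  · have hsorted : residues hn m ∘ u = residues hn m' ∘ u' := by
      have := strictMono_eq_of_map_univ_eq hu hu' <|
        (map_univ_val_comp_perm _ u).trans (hmult.trans (map_univ_val_comp_perm _ u').symm)
      exact funext fun a => Fin.ext (congrFun this a)
    have hdiv : ∑ a, m a / n = ∑ a, m' a / n := by
      refine (sum_eq_iff_sum_div_eq _ hn ?_).mp hsum
      simpa only [Finset.sum_eq_multiset_sum] using congrArg Multiset.sum hmult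
    rw [SetLike.mem_coe, LinearMap.mem_ker, map_sub, map_zsmul, map_zsmul,
      sign_smul_apply_epsI hn Φ hΦ, sign_smul_apply_epsI hn Φ hΦ, hdiv, hsorted, sub_self]

theorem apply_canonEps (hk : 0 < k)
    (hΦ : ∀ m, Φ (epsI n k m) = ζ ^ (∑ a, m a / n) • epsN n k (residues hn m))
    (p : ℕ × (Fin k ↪o Fin n)) : Φ (canonEps n k p) = ζ ^ p.1 • epsN n k p.2 := by
  rw [canonEps, hΦ, sum_canonTuple_div hn hk, residues_canonTuple]

theorem disjoint_span_canonEps_ker (hk : 0 < k) (u : (S10 n)ˣ)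
    (hΦ : ∀ m, Φ (epsI n k m) =
      (Polynomial.C (u : S10 n) * Polynomial.X) ^ (∑ a, m a / n) • epsN n k (residues hn m)) :
    Disjoint (Submodule.span (S10 n) (Set.range (canonEps n k))) (LinearMap.ker Φ) := by
  let b := ((Pi.basisFun (SQ10 n) (Fin n)).exteriorPower k).reindex
    (Set.powersetCard.ofFinEmbEquiv (n := k)).symm
  have hb (e : Fin k ↪o Fin n) : b e = epsN n k e := by
    simp only [b, Module.Basis.reindex_apply, Equiv.symm_symm, exteriorPower.basis_apply,
      exteriorPower.ιMulti_family, Equiv.symm_apply_apply, epsN]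
    congr 1
    exact funext fun a => Pi.basisFun_apply _ _ (e a)
  have hfamily : Φ ∘ canonEps n k =
      fun p => (Polynomial.C (u : S10 n) * Polynomial.X) ^ p.1 • b p.2 :=
    funext fun p => by rw [comp_apply, apply_canonEps hn Φ hk hΦ, hb]
  refine Submodule.range_ker_disjoint ?_
  rw [hfamily]
  exact linearIndependent_pow_smul_basis u b

end LinearMap

end RimHook

/-- **kernel of the equivariant rim-hook reduction map.**
Fix `n, k ≥ 1`.  Let `ψ' : M → N` be the `S`-linear map with
`ψ'(ε_{sn+i}) = ((−1)^{k−1} q)^s ε_i` for `s ≥ 0`, `1 ≤ i ≤ n`, and let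
`Ψ : ⋀^k_S M → ⋀^k_{S[q]} N` be the induced `S`-linear map on `k`-th exterior powers
(additive, compatible with scalars via `S → S[q]`, and sending
`v_1∧⋯∧v_k ↦ ψ'(v_1)∧⋯∧ψ'(v_k)`).  Then the kernel of `Ψ` is exactly the `S`-submodule
of `⋀^k_S M` spanned by the elements of `kerGens`. -/
theorem kernel_of_rim_hook_reduction (n k : ℕ) (hn : 0 < n) (hk : 0 < k)
    (ψ' : M10 n →ₗ[S10 n] N10 n)
    (hψ : ∀ m : ℕ, ψ' (Finsupp.single m (1 : S10 n)) =
      ((-1 : SQ10 n) ^ (k - 1) * Polynomial.X) ^ (m / n) •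
        (Pi.single (⟨m % n, Nat.mod_lt m hn⟩ : Fin n) (1 : SQ10 n) : N10 n))
    (Ψ : (⋀[S10 n]^k (M10 n)) →+ (⋀[SQ10 n]^k (N10 n)))
    (hΨlin : ∀ (c : S10 n) (x : ⋀[S10 n]^k (M10 n)),
      Ψ (c • x) = Polynomial.C c • Ψ x)
    (hΨ : ∀ v : Fin k → M10 n,
      Ψ ⟨ExteriorAlgebra.ιMulti (S10 n) k v,
          ExteriorAlgebra.ιMulti_range (S10 n) k (Set.mem_range_self _)⟩ =
        ⟨ExteriorAlgebra.ιMulti (SQ10 n) k (fun a => ψ' (v a)),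
          ExteriorAlgebra.ιMulti_range (SQ10 n) k (Set.mem_range_self _)⟩) :
    ∀ x : ⋀[S10 n]^k (M10 n),
      Ψ x = 0 ↔ x ∈ Submodule.span (S10 n) (kerGens n k) := by
  let Φ : ⋀[S10 n]^k (M10 n) →ₗ[S10 n] ⋀[SQ10 n]^k (N10 n) :=
    { Ψ with map_smul' := fun c x => (hΨlin c x).trans (algebraMap_smul (SQ10 n) c (Ψ x)) }
  let u : (S10 n)ˣ := (-1) ^ (k - 1)
  have hζ : (-1 : SQ10 n) ^ (k - 1) * Polynomial.X = Polynomial.C (u : S10 n) * Polynomial.X := by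
    simp [u]
  rw [hζ] at hψ
  have hΦ := RimHook.apply_epsI hn ψ' hψ Φ.toAddMonoidHom hΨ
  have hker : LinearMap.ker Φ = Submodule.span (S10 n) (kerGens n k) :=
    RimHook.eq_of_le_of_sup_eq_top_of_disjoint (RimHook.span_kerGens_le_ker hn Φ hΦ)
      (RimHook.span_kerGens_sup_span_canonEps hn hk)
      (RimHook.disjoint_span_canonEps_ker hn Φ hk u hΦ)
  exact fun x => SetLike.ext_iff.mp hker x
end
end

section
/- The endomorphisms ξ_t and η_t of V commute: ξ_t ∘ η_t = η_t ∘ ξ_t. Moreover, both are skew-adjoint with respect to the form: ⟨ξ_t u, v⟩ + ⟨u, ξ_t v⟩ = 0 and ⟨η_t u, v⟩ + ⟨u, η_t v⟩ = 0 for all u, v ∈ V; i.e., η_t lies in the intersection of 𝔰𝔬_{2n} with the centralizer of the regular element ξ_t. -/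
open scoped BigOperators

noncomputable section

open MvPolynomial

/-- The ring `R = ℚ[t_0, …, t_{n−1}]`. -/
abbrev R18 (n : ℕ) : Type := MvPolynomial (Fin n) ℚ

/-- `V = R^{2n}`, with coordinates indexed by `Fin n ⊕ Fin n`: `Sum.inl i` is the barred
index `ī` and `Sum.inr i` is the unbarred index `i`. -/
abbrev V18 (n : ℕ) : Type := (Fin n ⊕ Fin n) → R18 n

/-- The symmetric bilinear form with `⟨ε_ī, ε_j⟩ = δ_{ij}`,
`⟨ε_ī, ε_j̄⟩ = ⟨ε_i, ε_j⟩ = 0`. -/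
noncomputable def bform {n : ℕ} (u v : V18 n) : R18 n :=
  ∑ i : Fin n, (u (Sum.inl i) * v (Sum.inr i) + u (Sum.inr i) * v (Sum.inl i))

/-- `[u∧v]`, the endomorphism `w ↦ ⟨u,w⟩v − ⟨v,w⟩u` of `V`. -/
noncomputable def wedgeOp {n : ℕ} (u v : V18 n) : V18 n → V18 n :=
  fun w => bform u w • v - bform v w • u

/-- The basis vector `ε_ī`. -/
noncomputable def eb {n : ℕ} (i : Fin n) : V18 n := Pi.single (Sum.inl i) 1

/-- The basis vector `ε_i`. -/
noncomputable def ep {n : ℕ} (i : Fin n) : V18 n := Pi.single (Sum.inr i) 1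

/-- `ξ_t = [ε_0∧ε_1] + ∑_{i=1}^{n−1} [ε_{\overline{i−1}}∧ε_i] − ∑_{i=0}^{n−1} t_i [ε_ī∧ε_i]`. -/
noncomputable def xiT (n : ℕ) (hn : 2 ≤ n) : V18 n → V18 n :=
  wedgeOp (ep (⟨0, by omega⟩ : Fin n)) (ep (⟨1, by omega⟩ : Fin n)) +
    (∑ j : Fin (n - 1),
      wedgeOp (eb (⟨(j : ℕ), by omega⟩ : Fin n)) (ep (⟨(j : ℕ) + 1, by omega⟩ : Fin n))) -
    ∑ i : Fin n, (X i : R18 n) • wedgeOp (eb i) (ep i)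

/-- `η_t = −∑_{j=1}^{n−1} (t_{j+1}⋯t_{n−1}) [ε_0∧ε_j]
          + ∑_{0≤i≤j≤n−1} (t_0⋯t_{i−1} t_{j+1}⋯t_{n−1}) [ε_ī∧ε_j]`. -/
noncomputable def etaT (n : ℕ) (hn : 2 ≤ n) : V18 n → V18 n :=
  - (∑ j : Fin (n - 1),
      (∏ l ∈ Finset.Ioi (⟨(j : ℕ) + 1, by omega⟩ : Fin n), X l : R18 n) •
        wedgeOp (ep (⟨0, by omega⟩ : Fin n)) (ep (⟨(j : ℕ) + 1, by omega⟩ : Fin n))) +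
    ∑ i : Fin n, ∑ j ∈ Finset.Ici i,
      ((∏ l ∈ Finset.Iio i, X l) * ∏ l ∈ Finset.Ioi j, X l : R18 n) • wedgeOp (eb i) (ep j)

namespace St18

open Finset

variable {n : ℕ}

@[simp] lemma eb_inl (i k : Fin n) : eb i (Sum.inl k) = if k = i then 1 else 0 := by
  simp [eb, Pi.single_apply]

@[simp] lemma eb_inr (i k : Fin n) : eb i (Sum.inr k) = 0 := by
  simp [eb, Pi.single_apply]

@[simp] lemma ep_inl (i k : Fin n) : ep i (Sum.inl k) = 0 := by
  simp [ep, Pi.single_apply]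

@[simp] lemma ep_inr (i k : Fin n) : ep i (Sum.inr k) = if k = i then 1 else 0 := by
  simp [ep, Pi.single_apply]

@[simp] lemma bform_eb (i : Fin n) (w : V18 n) : bform (eb i) w = w (Sum.inr i) := by
  simp [bform, ite_mul]

@[simp] lemma bform_ep (i : Fin n) (w : V18 n) : bform (ep i) w = w (Sum.inl i) := by
  simp [bform, ite_mul]

lemma wedge_apply (u v w : V18 n) (s : Fin n ⊕ Fin n) :
    wedgeOp u v w s = bform u w * v s - bform v w * u s := by
  simp [wedgeOp, smul_eq_mul]

/-- `t_i`, extended by `1` beyond `n`. -/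
noncomputable def tt (n i : ℕ) : R18 n := if h : i < n then X ⟨i, h⟩ else 1

/-- barred coordinates, extended by `0`. -/
noncomputable def xc (w : V18 n) (i : ℕ) : R18 n := if h : i < n then w (Sum.inl ⟨i, h⟩) else 0

/-- unbarred coordinates, extended by `0`. -/
noncomputable def yc (w : V18 n) (i : ℕ) : R18 n := if h : i < n then w (Sum.inr ⟨i, h⟩) else 0

noncomputable def aa (n k : ℕ) : R18 n := ∏ l ∈ range k, tt n l
noncomputable def bb (n k : ℕ) : R18 n := ∏ l ∈ Ico (k+1) n, tt n l
noncomputable def PP (n : ℕ) : R18 n := ∏ l ∈ range n, tt n l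

lemma tt_lt {i : ℕ} (h : i < n) : tt n i = X ⟨i, h⟩ := dif_pos h
lemma xc_lt (w : V18 n) {i : ℕ} (h : i < n) : xc w i = w (Sum.inl ⟨i, h⟩) := dif_pos h
lemma xc_ge (w : V18 n) {i : ℕ} (h : n ≤ i) : xc w i = 0 := dif_neg (by omega)
lemma yc_lt (w : V18 n) {i : ℕ} (h : i < n) : yc w i = w (Sum.inr ⟨i, h⟩) := dif_pos h
lemma yc_ge (w : V18 n) {i : ℕ} (h : n ≤ i) : yc w i = 0 := dif_neg (by omega)

lemma xc_val (w : V18 n) (j : Fin n) : xc w (j:ℕ) = w (Sum.inl j) := by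
  rw [xc_lt w j.isLt]

lemma yc_val (w : V18 n) (j : Fin n) : yc w (j:ℕ) = w (Sum.inr j) := by
  rw [yc_lt w j.isLt]

lemma tt_val (j : Fin n) : tt n (j:ℕ) = X j := by
  rw [tt_lt j.isLt]

lemma prod_Iio_eq (i : Fin n) : (∏ l ∈ Finset.Iio i, (X l : R18 n)) = aa n ↑i := by
  have h1 : Finset.Iio i = Finset.univ.filter (fun l => l < i) := by ext; simp
  rw [h1, Finset.prod_filter]
  have h2 : ∀ l : Fin n, (if l < i then (X l : R18 n) else 1)
      = (fun m => if m < (i:ℕ) then tt n m else 1) (l : ℕ) := by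
    intro l
    simp only [Fin.lt_def]
    by_cases h : (l:ℕ) < (i:ℕ)
    · simp [h, tt_lt l.isLt]
    · simp [h]
  rw [Finset.prod_congr rfl (fun l _ => h2 l),
    Fin.prod_univ_eq_prod_range (fun m => if m < (i:ℕ) then tt n m else 1) n,
    ← Finset.prod_filter]
  have h3 : (Finset.range n).filter (fun m => m < (i:ℕ)) = Finset.range (i:ℕ) := by
    ext m; simp only [Finset.mem_filter, Finset.mem_range]
    have := i.isLt; omega
  rw [h3]; rfl

lemma prod_Ioi_eq (j : Fin n) : (∏ l ∈ Finset.Ioi j, (X l : R18 n)) = bb n ↑j := by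
  have h1 : Finset.Ioi j = Finset.univ.filter (fun l => j < l) := by ext; simp
  rw [h1, Finset.prod_filter]
  have h2 : ∀ l : Fin n, (if j < l then (X l : R18 n) else 1)
      = (fun m => if (j:ℕ) < m then tt n m else 1) (l : ℕ) := by
    intro l
    simp only [Fin.lt_def]
    by_cases h : (j:ℕ) < (l:ℕ)
    · simp [h, tt_lt l.isLt]
    · simp [h]
  rw [Finset.prod_congr rfl (fun l _ => h2 l),
    Fin.prod_univ_eq_prod_range (fun m => if (j:ℕ) < m then tt n m else 1) n,
    ← Finset.prod_filter]
  have h3 : (Finset.range n).filter (fun m => (j:ℕ) < m) = Finset.Ico ((j:ℕ)+1) n := by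
    ext m; simp only [Finset.mem_filter, Finset.mem_range, Finset.mem_Ico]; omega
  rw [h3]; rfl

lemma sum_Ici_eq (k : Fin n) (F : ℕ → R18 n) :
    (∑ j ∈ Finset.Ici k, F (j:ℕ)) = ∑ m ∈ Finset.Ico (k:ℕ) n, F m := by
  have h1 : Finset.Ici k = Finset.univ.filter (fun j => k ≤ j) := by ext; simp
  rw [h1, Finset.sum_filter]
  have h2 : ∀ j : Fin n, (if k ≤ j then F (j:ℕ) else 0)
      = (fun m => if (k:ℕ) ≤ m then F m else 0) (j:ℕ) := by
    intro j; simp only [Fin.le_def]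
  rw [Finset.sum_congr rfl (fun j _ => h2 j),
    Fin.sum_univ_eq_sum_range (fun m => if (k:ℕ) ≤ m then F m else 0) n,
    ← Finset.sum_filter]
  congr 1
  ext m; simp only [Finset.mem_filter, Finset.mem_range, Finset.mem_Ico]; omega

lemma sum_Iic_eq (k : Fin n) (F : ℕ → R18 n) :
    (∑ j ∈ Finset.Iic k, F (j:ℕ)) = ∑ m ∈ Finset.range ((k:ℕ)+1), F m := by
  have h1 : Finset.Iic k = Finset.univ.filter (fun j => j ≤ k) := by ext; simp
  rw [h1, Finset.sum_filter]
  have h2 : ∀ j : Fin n, (if j ≤ k then F (j:ℕ) else 0)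
      = (fun m => if m ≤ (k:ℕ) then F m else 0) (j:ℕ) := by
    intro j; simp only [Fin.le_def]
  rw [Finset.sum_congr rfl (fun j _ => h2 j),
    Fin.sum_univ_eq_sum_range (fun m => if m ≤ (k:ℕ) then F m else 0) n,
    ← Finset.sum_filter]
  congr 1
  ext m; simp only [Finset.mem_filter, Finset.mem_range]
  have := k.isLt; omega

end St18

namespace St18X
open Finset St18

lemma xi_inl {n : ℕ} (hn : 2 ≤ n) (w : V18 n) (k : Fin n) :
    xiT n hn w (Sum.inl k) = tt n ↑k * xc w ↑k - xc w (↑k+1) := by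
  simp only [xiT, Pi.add_apply, Pi.sub_apply, Finset.sum_apply, Pi.smul_apply, smul_eq_mul,
    wedge_apply, bform_eb, bform_ep, eb_inl, eb_inr, ep_inl, ep_inr,
    mul_zero, mul_one, mul_ite, zero_sub, sub_zero, zero_add, zero_mul, mul_neg, neg_neg]
  simp only [Finset.sum_neg_distrib]
  simp only [Finset.sum_ite_eq, Finset.mem_univ, if_true]
  simp only [Fin.ext_iff, ← St18.xc_lt]
  rw [Fin.sum_univ_eq_sum_range (fun m => if (k:ℕ) = m then St18.xc w (m+1) else 0) (n-1)]
  rw [Finset.sum_ite_eq]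
  by_cases hk1 : (k:ℕ) < n - 1
  · have hkn := k.isLt
    simp only [Finset.mem_range, hk1, if_true]
    rw [St18.tt_lt k.isLt, St18.xc_lt w k.isLt]
    ring_nf
  · have hkn := k.isLt
    simp only [Finset.mem_range, hk1, if_false]
    rw [St18.xc_ge w (i := (k:ℕ)+1) (by omega), St18.tt_lt k.isLt, St18.xc_lt w k.isLt]
    simp

lemma xi_inr {n : ℕ} (hn : 2 ≤ n) (w : V18 n) (k : Fin n) :
    xiT n hn w (Sum.inr k) = (if (k:ℕ) = 1 then St18.xc w 0 else 0)
      - (if (k:ℕ) = 0 then St18.xc w 1 else 0)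
      + (if (k:ℕ) = 0 then 0 else St18.yc w ((k:ℕ)-1)) - St18.tt n ↑k * St18.yc w ↑k := by
  simp only [xiT, Pi.add_apply, Pi.sub_apply, Finset.sum_apply, Pi.smul_apply, smul_eq_mul,
    wedge_apply, bform_eb, bform_ep, eb_inl, eb_inr, ep_inl, ep_inr,
    mul_zero, mul_one, mul_ite, zero_sub, sub_zero, zero_add, zero_mul, mul_neg, neg_neg]
  simp only [Finset.sum_ite_eq, Finset.mem_univ, if_true]
  simp only [Fin.ext_iff, ← St18.xc_lt, ← St18.yc_lt]
  rw [Fin.sum_univ_eq_sum_range (fun m => if (k:ℕ) = m+1 then St18.yc w m else 0) (n-1)]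
  by_cases hk0 : (k:ℕ) = 0
  · rw [Finset.sum_eq_zero (fun m hm => by rw [if_neg (by omega)])]
    rw [St18.tt_lt k.isLt, St18.yc_lt w k.isLt]
    simp [hk0]
    exact Or.inl (Fin.ext hk0)
  · have hkn := k.isLt
    rw [Finset.sum_eq_single ((k:ℕ)-1)]
    · have hc : (k:ℕ) = (k:ℕ) - 1 + 1 := by omega
      rw [if_pos hc, St18.tt_lt k.isLt, St18.yc_lt w k.isLt]
      simp [hk0]
    · intro m hm hne
      rw [Finset.mem_range] at hm
      rw [if_neg (by omega)]
    · intro h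
      exact absurd (Finset.mem_range.mpr (by omega)) h

lemma eta_inl {n : ℕ} (hn : 2 ≤ n) (w : V18 n) (k : Fin n) :
    etaT n hn w (Sum.inl k)
      = -(St18.aa n ↑k * ∑ j ∈ Finset.Ico (k:ℕ) n, St18.bb n j * St18.xc w j) := by
  simp only [etaT, Pi.add_apply, Pi.neg_apply, Finset.sum_apply, Pi.smul_apply, smul_eq_mul,
    wedge_apply, bform_eb, bform_ep, eb_inl, eb_inr, ep_inl, ep_inr,
    mul_zero, mul_one, mul_ite, zero_sub, sub_zero, zero_add, zero_mul, mul_neg, neg_neg,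
    Finset.sum_const_zero, neg_zero, St18.prod_Iio_eq, St18.prod_Ioi_eq]
  rw [Finset.sum_eq_single k]
  · simp only [eq_self_iff_true, if_true]
    have hj : ∀ j : Fin n, (-(St18.aa n ↑k * St18.bb n ↑j * w (Sum.inl j)) : R18 n)
        = (fun m => -(St18.aa n ↑k * St18.bb n m * St18.xc w m)) (j:ℕ) := fun j => by
      simp only [St18.xc_val]
    rw [Finset.sum_congr rfl (fun j _ => hj j),
      St18.sum_Ici_eq k (fun m => -(St18.aa n ↑k * St18.bb n m * St18.xc w m)),
      Finset.mul_sum, ← Finset.sum_neg_distrib]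
    exact Finset.sum_congr rfl (fun m _ => by ring)
  · intro x _ hne
    apply Finset.sum_eq_zero
    intro j _
    rw [if_neg (Ne.symm hne), neg_zero]
  · intro h
    exact absurd (Finset.mem_univ k) h

lemma eta_inr {n : ℕ} (hn : 2 ≤ n) (w : V18 n) (k : Fin n) :
    etaT n hn w (Sum.inr k)
      = -(if (k:ℕ) = 0 then 0 else St18.bb n ↑k * St18.xc w 0)
        + (if (k:ℕ) = 0 then ∑ j ∈ Finset.Ico 1 n, St18.bb n j * St18.xc w j else 0)
        + St18.bb n ↑k * ∑ i ∈ Finset.range ((k:ℕ)+1), St18.aa n i * St18.yc w i := by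
  simp only [etaT, Pi.add_apply, Pi.neg_apply, Finset.sum_apply, Pi.smul_apply, smul_eq_mul,
    wedge_apply, bform_eb, bform_ep, eb_inl, eb_inr, ep_inl, ep_inr,
    mul_zero, mul_one, mul_ite, zero_sub, sub_zero, zero_add, zero_mul, mul_neg, neg_neg,
    Finset.sum_const_zero, neg_zero, St18.prod_Iio_eq, St18.prod_Ioi_eq]
  simp only [Fin.ext_iff, ← St18.xc_lt]
  have hB : ∀ x : Fin n,
      (∑ x1 ∈ Finset.Ici x, if (k:ℕ) = (x1:ℕ) then St18.aa n ↑x * St18.bb n ↑x1 * w (Sum.inr x) else 0)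
        = (fun m => if m ≤ (k:ℕ) then St18.aa n m * St18.bb n ↑k * St18.yc w m else 0) (x:ℕ) := by
    intro x
    rw [St18.sum_Ici_eq x (fun m => if (k:ℕ) = m then St18.aa n ↑x * St18.bb n m * w (Sum.inr x) else 0)]
    rw [Finset.sum_ite_eq]
    simp only [Finset.mem_Ico]
    by_cases h : (x:ℕ) ≤ (k:ℕ)
    · rw [if_pos ⟨h, k.isLt⟩, if_pos h, St18.yc_val]
    · rw [if_neg (by omega), if_neg h]
  rw [Finset.sum_congr rfl (fun x _ => hB x),
    Fin.sum_univ_eq_sum_range (fun m => if m ≤ (k:ℕ) then St18.aa n m * St18.bb n ↑k * St18.yc w m else 0) n,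
    ← Finset.sum_filter]
  have hset : (Finset.range n).filter (fun m => m ≤ (k:ℕ)) = Finset.range ((k:ℕ)+1) := by
    ext m; simp only [Finset.mem_filter, Finset.mem_range]; have := k.isLt; omega
  rw [hset]
  have h3 : ∑ m ∈ Finset.range ((k:ℕ)+1), St18.aa n m * St18.bb n ↑k * St18.yc w m
      = St18.bb n ↑k * ∑ i ∈ Finset.range ((k:ℕ)+1), St18.aa n i * St18.yc w i := by
    rw [Finset.mul_sum]; exact Finset.sum_congr rfl (fun m _ => by ring)
  rw [h3]
  rw [Fin.sum_univ_eq_sum_range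
    (fun m => St18.bb n (m+1) * ((if (k:ℕ) = m+1 then St18.xc w 0 else 0)
      - if (k:ℕ) = 0 then St18.xc w (m+1) else 0)) (n-1)]
  by_cases hk0 : (k:ℕ) = 0
  · have h1 : ∀ m ∈ Finset.range (n-1), St18.bb n (m+1) * ((if (k:ℕ) = m+1 then St18.xc w 0 else 0)
        - if (k:ℕ) = 0 then St18.xc w (m+1) else 0) = -(St18.bb n (m+1) * St18.xc w (m+1)) := by
      intro m hm; rw [if_neg (by omega), if_pos hk0]; ring
    rw [Finset.sum_congr rfl h1]
    have h2 : ∑ j ∈ Finset.Ico 1 n, St18.bb n j * St18.xc w j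
        = ∑ m ∈ Finset.range (n-1), St18.bb n (m+1) * St18.xc w (m+1) := by
      rw [Finset.sum_Ico_eq_sum_range]
      exact Finset.sum_congr rfl (fun m _ => by rw [Nat.add_comm 1 m])
    rw [if_pos hk0, if_pos hk0, h2, Finset.sum_neg_distrib]
    ring
  · have h1 : ∀ m ∈ Finset.range (n-1), St18.bb n (m+1) * ((if (k:ℕ) = m+1 then St18.xc w 0 else 0)
        - if (k:ℕ) = 0 then St18.xc w (m+1) else 0)
        = if (k:ℕ) = m+1 then St18.bb n (m+1) * St18.xc w 0 else 0 := by
      intro m hm; rw [if_neg hk0]; split_ifs <;> ring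
    rw [Finset.sum_congr rfl h1]
    have hkn := k.isLt
    rw [Finset.sum_eq_single ((k:ℕ)-1)]
    · have hc : (k:ℕ) - 1 + 1 = (k:ℕ) := by omega
      rw [hc, if_pos rfl, if_neg hk0, if_neg hk0]
      ring
    · intro m hm hne
      rw [Finset.mem_range] at hm
      rw [if_neg (by omega)]
    · intro h
      exact absurd (Finset.mem_range.mpr (by omega)) h

open St18

lemma aa_zero {n : ℕ} : St18.aa n 0 = 1 := Finset.prod_range_zero _

lemma aa_succ {n k : ℕ} : St18.aa n (k+1) = St18.aa n k * St18.tt n k :=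
  Finset.prod_range_succ _ _

lemma PP_split {n k : ℕ} (h : k < n) :
    St18.PP n = St18.aa n k * (St18.tt n k * St18.bb n k) := by
  simp only [St18.PP, St18.aa, St18.bb, Finset.range_eq_Ico]
  rw [← Finset.prod_Ico_consecutive (St18.tt n) (Nat.zero_le k) h.le,
    Finset.prod_eq_prod_Ico_succ_bot h]

lemma PP_split' {n k : ℕ} (h : k ≤ n) :
    St18.PP n = St18.aa n k * ∏ l ∈ Finset.Ico k n, St18.tt n l := by
  simp only [St18.PP, St18.aa, Finset.range_eq_Ico]
  rw [← Finset.prod_Ico_consecutive (St18.tt n) (Nat.zero_le k) h]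

lemma tt_bb {n k : ℕ} (h : k < n) (hk : 1 ≤ k) :
    St18.tt n k * St18.bb n k = St18.bb n (k-1) := by
  have hc : (k-1)+1 = k := by omega
  simp only [St18.bb, hc]
  exact (Finset.prod_eq_prod_Ico_succ_bot h (St18.tt n)).symm

lemma xc_xi {n : ℕ} (hn : 2 ≤ n) (w : V18 n) (k : ℕ) :
    St18.xc (xiT n hn w) k = St18.tt n k * St18.xc w k - St18.xc w (k+1) := by
  by_cases h : k < n
  · rw [St18.xc_lt _ h]
    exact xi_inl hn w ⟨k, h⟩
  · rw [St18.xc_ge _ (by omega), St18.xc_ge w (by omega), St18.xc_ge w (by omega)]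
    ring

lemma yc_xi {n : ℕ} (hn : 2 ≤ n) (w : V18 n) {k : ℕ} (h : k < n) :
    St18.yc (xiT n hn w) k = (if k = 1 then St18.xc w 0 else 0)
      - (if k = 0 then St18.xc w 1 else 0)
      + (if k = 0 then 0 else St18.yc w (k-1)) - St18.tt n k * St18.yc w k := by
  rw [St18.yc_lt _ h]
  exact xi_inr hn w ⟨k, h⟩

lemma xc_eta {n : ℕ} (hn : 2 ≤ n) (w : V18 n) (k : ℕ) :
    St18.xc (etaT n hn w) k
      = -(St18.aa n k * ∑ j ∈ Finset.Ico k n, St18.bb n j * St18.xc w j) := by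
  by_cases h : k < n
  · rw [St18.xc_lt _ h]
    exact eta_inl hn w ⟨k, h⟩
  · rw [St18.xc_ge _ (by omega), Finset.Ico_eq_empty (by omega), Finset.sum_empty]
    ring

lemma yc_eta {n : ℕ} (hn : 2 ≤ n) (w : V18 n) {k : ℕ} (h : k < n) :
    St18.yc (etaT n hn w) k
      = -(if k = 0 then 0 else St18.bb n k * St18.xc w 0)
        + (if k = 0 then ∑ j ∈ Finset.Ico 1 n, St18.bb n j * St18.xc w j else 0)
        + St18.bb n k * ∑ i ∈ Finset.range (k+1), St18.aa n i * St18.yc w i := by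
  rw [St18.yc_lt _ h]
  exact eta_inr hn w ⟨k, h⟩

lemma telescope {n : ℕ} (w : V18 n) :
    ∀ d k, n - k = d → k ≤ n →
      (∑ j ∈ Finset.Ico k n, St18.bb n j * (St18.tt n j * St18.xc w j - St18.xc w (j+1)))
        = (∏ l ∈ Finset.Ico k n, St18.tt n l) * St18.xc w k := by
  intro d
  induction d with
  | zero =>
    intro k hd hk
    have hkn : k = n := by omega
    subst hkn
    simp [St18.xc_ge w (le_refl k)]
  | succ d ih =>
    intro k hd hk
    have hkn : k < n := by omega
    rw [Finset.sum_eq_sum_Ico_succ_bot hkn, ih (k+1) (by omega) (by omega),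
      Finset.prod_eq_prod_Ico_succ_bot hkn]
    simp only [St18.bb]
    ring

lemma comp1_inl {n : ℕ} (hn : 2 ≤ n) (w : V18 n) (k : Fin n) :
    xiT n hn (etaT n hn w) (Sum.inl k) = -(St18.PP n * w (Sum.inl k)) := by
  rw [xi_inl hn _ k, xc_eta hn w, xc_eta hn w,
    Finset.sum_eq_sum_Ico_succ_bot k.isLt, aa_succ, PP_split k.isLt, ← St18.xc_val w k]
  ring

lemma comp2_inl {n : ℕ} (hn : 2 ≤ n) (w : V18 n) (k : Fin n) :
    etaT n hn (xiT n hn w) (Sum.inl k) = -(St18.PP n * w (Sum.inl k)) := by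
  rw [eta_inl hn _ k]
  have h1 : ∀ j ∈ Finset.Ico (k:ℕ) n, St18.bb n j * St18.xc (xiT n hn w) j
      = St18.bb n j * (St18.tt n j * St18.xc w j - St18.xc w (j+1)) := by
    intro j _; rw [xc_xi hn w j]
  rw [Finset.sum_congr rfl h1, telescope w (n - (k:ℕ)) (k:ℕ) rfl k.isLt.le,
    PP_split' (n := n) (k := (k:ℕ)) k.isLt.le, ← St18.xc_val w k]
  ring

lemma comp1_inr {n : ℕ} (hn : 2 ≤ n) (w : V18 n) (k : Fin n) :
    xiT n hn (etaT n hn w) (Sum.inr k) = -(St18.PP n * w (Sum.inr k)) := by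
  rw [xi_inr hn _ k, ← St18.yc_val w k]
  by_cases hk0 : (k:ℕ) = 0
  · rw [hk0, if_neg (by omega), if_pos rfl, if_pos rfl,
      xc_eta hn w 1, yc_eta hn w (show (0:ℕ) < n by omega),
      if_pos rfl, if_pos rfl, Finset.sum_range_one, aa_zero,
      PP_split (show (0:ℕ) < n by omega), aa_zero,
      show St18.aa n 1 = St18.aa n 0 * St18.tt n 0 from aa_succ, aa_zero]
    ring
  · by_cases hk1 : (k:ℕ) = 1
    · have hbb : St18.bb n 0 = St18.tt n 1 * St18.bb n 1 :=
        (tt_bb (by omega) (le_refl 1)).symm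
      rw [hk1, if_pos rfl, if_neg (by omega), if_neg (by omega),
        xc_eta hn w 0, aa_zero,
        yc_eta hn w (show (1:ℕ)-1 < n by omega),
        yc_eta hn w (show (1:ℕ) < n by omega)]
      rw [show (1:ℕ)-1 = 0 from rfl, if_pos rfl, if_pos rfl, if_neg (by omega), if_neg (by omega),
        Finset.sum_range_one, Finset.sum_range_succ, Finset.sum_range_one, aa_zero,
        Finset.sum_eq_sum_Ico_succ_bot (show (0:ℕ) < n by omega),
        PP_split (show (1:ℕ) < n by omega), hbb]
      ring
    · have hc : (k:ℕ) - 1 + 1 = (k:ℕ) := by omega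
      have hbb : St18.bb n ((k:ℕ)-1) = St18.tt n ↑k * St18.bb n ↑k :=
        (tt_bb k.isLt (by omega)).symm
      rw [if_neg hk1, if_neg hk0, if_neg hk0,
        yc_eta hn w (show (k:ℕ)-1 < n by have := k.isLt; omega),
        yc_eta hn w k.isLt,
        if_neg (by omega), if_neg (by omega), if_neg hk0, if_neg hk0, hc,
        Finset.sum_range_succ, PP_split k.isLt, hbb]
      ring

lemma comp2_inr {n : ℕ} (hn : 2 ≤ n) (w : V18 n) (k : Fin n) :
    etaT n hn (xiT n hn w) (Sum.inr k) = -(St18.PP n * w (Sum.inr k)) := by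
  rw [eta_inr hn _ k, ← St18.yc_val w k]
  by_cases hk0 : (k:ℕ) = 0
  · rw [hk0, if_pos rfl, if_pos rfl]
    have h1 : ∀ j ∈ Finset.Ico 1 n, St18.bb n j * St18.xc (xiT n hn w) j
        = St18.bb n j * (St18.tt n j * St18.xc w j - St18.xc w (j+1)) := by
      intro j _; rw [xc_xi hn w j]
    rw [Finset.sum_congr rfl h1, telescope w (n-1) 1 rfl (by omega),
      Finset.sum_range_one, aa_zero,
      yc_xi hn w (show (0:ℕ) < n by omega),
      if_neg (by omega), if_pos rfl, if_pos rfl,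
      show (∏ l ∈ Finset.Ico 1 n, St18.tt n l) = St18.bb n 0 from rfl,
      PP_split (show (0:ℕ) < n by omega), aa_zero]
    ring
  · rw [if_neg hk0, if_neg hk0, xc_xi hn w 0]
    have h4 : ∀ i ∈ Finset.range ((k:ℕ)+1), St18.aa n i * St18.yc (xiT n hn w) i
        = (if i = 1 then St18.aa n 1 * St18.xc w 0 else 0)
          - (if i = 0 then St18.aa n 0 * St18.xc w 1 else 0)
          + (if i = 0 then 0 else St18.aa n i * St18.yc w (i-1))
          - St18.aa n (i+1) * St18.yc w i := by
      intro i hi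
      rw [Finset.mem_range] at hi
      have hin : i < n := by have := k.isLt; omega
      rw [yc_xi hn w hin, aa_succ (k := i)]
      by_cases h0 : i = 0
      · subst h0
        norm_num
        ring
      · by_cases h1 : i = 1
        · subst h1
          norm_num
          ring
        · rw [if_neg h1, if_neg h0, if_neg h0, if_neg h1, if_neg h0, if_neg h0]
          ring
    rw [Finset.sum_congr rfl h4,
      Finset.sum_sub_distrib, Finset.sum_add_distrib, Finset.sum_sub_distrib]
    simp only [Finset.sum_ite_eq', Finset.mem_range]
    rw [if_pos (by omega), if_pos (by omega)]
    have hS3 : ∑ i ∈ Finset.range ((k:ℕ)+1), (if i = 0 then 0 else St18.aa n i * St18.yc w (i-1))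
        = ∑ i ∈ Finset.range (k:ℕ), St18.aa n (i+1) * St18.yc w i := by
      rw [show Finset.range ((k:ℕ)+1) = Finset.Ico 0 ((k:ℕ)+1) from by rw [Nat.Ico_zero_eq_range],
        Finset.sum_eq_sum_Ico_succ_bot (show 0 < (k:ℕ)+1 by omega), if_pos rfl, zero_add,
        Finset.sum_Ico_eq_sum_range]
      simp only [Nat.add_sub_cancel]
      apply Finset.sum_congr rfl
      intro i _
      rw [if_neg (by omega), show 0+1+i = i+1 from by omega, Nat.add_sub_cancel]
    rw [hS3, Finset.sum_range_succ, PP_split k.isLt, aa_succ (k := (k:ℕ)),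
      show St18.aa n 1 = St18.aa n 0 * St18.tt n 0 from aa_succ, aa_zero]
    norm_num
    ring

lemma bform_symm (u v : V18 n) : bform u v = bform v u :=
  Finset.sum_congr rfl (fun i _ => by ring)

lemma bform_add_left (x y v : V18 n) : bform (x + y) v = bform x v + bform y v := by
  simp only [bform, Pi.add_apply, ← Finset.sum_add_distrib]
  exact Finset.sum_congr rfl (fun i _ => by ring)

lemma bform_sub_left (x y v : V18 n) : bform (x - y) v = bform x v - bform y v := by
  simp only [bform, Pi.sub_apply, ← Finset.sum_sub_distrib]
  exact Finset.sum_congr rfl (fun i _ => by ring)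

lemma bform_neg_left (x v : V18 n) : bform (-x) v = -bform x v := by
  simp only [bform, Pi.neg_apply, ← Finset.sum_neg_distrib]
  exact Finset.sum_congr rfl (fun i _ => by ring)

lemma bform_smul_left (c : R18 n) (x v : V18 n) : bform (c • x) v = c * bform x v := by
  simp only [bform, Pi.smul_apply, smul_eq_mul, Finset.mul_sum]
  exact Finset.sum_congr rfl (fun i _ => by ring)

lemma bform_zero_left (v : V18 n) : bform (0 : V18 n) v = 0 := by
  simp [bform]

lemma bform_add_right (u x y : V18 n) : bform u (x + y) = bform u x + bform u y := by
  rw [bform_symm, bform_add_left, bform_symm x u, bform_symm y u]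

lemma bform_sub_right (u x y : V18 n) : bform u (x - y) = bform u x - bform u y := by
  rw [bform_symm, bform_sub_left, bform_symm x u, bform_symm y u]

lemma bform_neg_right (u x : V18 n) : bform u (-x) = -bform u x := by
  rw [bform_symm, bform_neg_left, bform_symm x u]

lemma bform_smul_right (c : R18 n) (u x : V18 n) : bform u (c • x) = c * bform u x := by
  rw [bform_symm, bform_smul_left, bform_symm x u]

lemma bform_zero_right (u : V18 n) : bform u (0 : V18 n) = 0 := by
  rw [bform_symm, bform_zero_left]

/-- Skew-adjointness predicate. -/
def IsSkew (f : V18 n → V18 n) : Prop :=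
  ∀ u v : V18 n, bform (f u) v + bform u (f v) = 0

lemma bform_wedge_left (a b u v : V18 n) :
    bform (wedgeOp a b u) v = bform a u * bform b v - bform b u * bform a v := by
  rw [show wedgeOp a b u = bform a u • b - bform b u • a from rfl,
    bform_sub_left, bform_smul_left, bform_smul_left]

lemma isSkew_wedge (a b : V18 n) : IsSkew (wedgeOp a b) := by
  intro u v
  rw [bform_symm u (wedgeOp a b v), bform_wedge_left, bform_wedge_left,
    bform_symm b u, bform_symm a u]
  ring

lemma IsSkew.add {f g : V18 n → V18 n} (hf : IsSkew f) (hg : IsSkew g) : IsSkew (f + g) := by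
  intro u v
  simp only [Pi.add_apply, bform_add_left, bform_add_right]
  linear_combination hf u v + hg u v

lemma IsSkew.sub {f g : V18 n → V18 n} (hf : IsSkew f) (hg : IsSkew g) : IsSkew (f - g) := by
  intro u v
  simp only [Pi.sub_apply, bform_sub_left, bform_sub_right]
  linear_combination hf u v - hg u v

lemma IsSkew.neg {f : V18 n → V18 n} (hf : IsSkew f) : IsSkew (-f) := by
  intro u v
  simp only [Pi.neg_apply, bform_neg_left, bform_neg_right]
  linear_combination -hf u v

lemma IsSkew.smul (c : R18 n) {f : V18 n → V18 n} (hf : IsSkew f) : IsSkew (c • f) := by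
  intro u v
  simp only [Pi.smul_apply, bform_smul_left, bform_smul_right]
  linear_combination c * hf u v

lemma IsSkew.zero : IsSkew (0 : V18 n → V18 n) := by
  intro u v
  simp only [Pi.zero_apply, bform_zero_left, bform_zero_right, add_zero]

lemma IsSkew.sum {α : Type*} (s : Finset α) (f : α → (V18 n → V18 n))
    (h : ∀ i ∈ s, IsSkew (f i)) : IsSkew (∑ i ∈ s, f i) :=
  Finset.sum_induction f IsSkew (fun _ _ ha hb => ha.add hb) IsSkew.zero h

lemma isSkew_xiT {n : ℕ} (hn : 2 ≤ n) : IsSkew (xiT n hn) := by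
  simp only [xiT]
  exact ((isSkew_wedge _ _).add
    (IsSkew.sum _ _ (fun j _ => isSkew_wedge _ _))).sub
    (IsSkew.sum _ _ (fun i _ => IsSkew.smul _ (isSkew_wedge _ _)))

lemma isSkew_etaT {n : ℕ} (hn : 2 ≤ n) : IsSkew (etaT n hn) := by
  simp only [etaT]
  exact (IsSkew.neg (IsSkew.sum _ _ (fun j _ => IsSkew.smul _ (isSkew_wedge _ _)))).add
    (IsSkew.sum _ _ (fun i _ => IsSkew.sum _ _ (fun j _ => IsSkew.smul _ (isSkew_wedge _ _))))

end St18X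

/-- The endomorphisms `ξ_t` and `η_t` of `V` commute,
`ξ_t ∘ η_t = η_t ∘ ξ_t`, and both are skew-adjoint with respect to the bilinear form:
`⟨ξ_t u, v⟩ + ⟨u, ξ_t v⟩ = 0` and `⟨η_t u, v⟩ + ⟨u, η_t v⟩ = 0` for all `u, v ∈ V`;
i.e. `η_t` lies in the intersection of `𝔰𝔬_{2n}` with the centralizer of the regular
element `ξ_t`. -/
theorem etaT_commutes_and_skew (n : ℕ) (hn : 2 ≤ n) :
    (xiT n hn) ∘ (etaT n hn) = (etaT n hn) ∘ (xiT n hn) ∧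
      (∀ u v : V18 n, bform (xiT n hn u) v + bform u (xiT n hn v) = 0) ∧
      (∀ u v : V18 n, bform (etaT n hn u) v + bform u (etaT n hn v) = 0) := by
  refine ⟨?_, St18X.isSkew_xiT hn, St18X.isSkew_etaT hn⟩
  funext w
  funext s
  simp only [Function.comp_apply]
  cases s with
  | inl k => rw [St18X.comp1_inl hn w k, St18X.comp2_inl hn w k]
  | inr k => rw [St18X.comp1_inr hn w k, St18X.comp2_inr hn w k]

end
end
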